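/- arXiv:1404.7253 — 6 statements merged into one kernel-verified Lean document; each statement's English description precedes it below -/
import Mathlib

section
/- Let ⟨·,·⟩ be any inner product on E with orthonormal basis (E₁,…,E_N), and let B(x) be the n × N matrix whose (i,j) entry is ∂E_j/∂x_i(x). For x ≠ 0 set A(x) = B(x)·ᵗB(x) (an invertible symmetric n × n matrix) and M(x) = A(x)⁻¹. Then for every homogeneous polynomial P ∈ E, the distance from P to the real discriminant Δ in the norm associated to the inner product equals min over x in the unit sphere S^{n−1} of √(ᵗ∇P(x) · M(x) · ∇P(x)). -/
open MvPolynomial Finset Matrix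

/-- The `n × N` matrix `B(x)` whose `(i,j)` entry is `∂E_j/∂x_i (x)`, for a basis
`(E_1,…,E_N)` of the space of homogeneous polynomials of degree `d` in `n` variables. -/
noncomputable def Bmat (n d N : ℕ)
    (b : Module.Basis (Fin N) ℝ (MvPolynomial.homogeneousSubmodule (Fin n) ℝ d))
    (x : Fin n → ℝ) : Matrix (Fin n) (Fin N) ℝ :=
  Matrix.of fun i j => eval x (pderiv i ((b j : MvPolynomial (Fin n) ℝ)))

/-- `M(x) = (B(x)·ᵗB(x))⁻¹`. -/
noncomputable def Mmat (n d N : ℕ)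
    (b : Module.Basis (Fin N) ℝ (MvPolynomial.homogeneousSubmodule (Fin n) ℝ d))
    (x : Fin n → ℝ) : Matrix (Fin n) (Fin n) ℝ :=
  (Bmat n d N b x * (Bmat n d N b x)ᵀ)⁻¹

/-! ### Auxiliary linear algebra lemmas -/

section LA
variable {n N : ℕ} (B : Matrix (Fin n) (Fin N) ℝ) (p : Fin N → ℝ)

lemma aux_proj_norm (h : IsUnit (B * Bᵀ).det) :
    (Bᵀ *ᵥ ((B * Bᵀ)⁻¹ *ᵥ (B *ᵥ p))) ⬝ᵥ (Bᵀ *ᵥ ((B * Bᵀ)⁻¹ *ᵥ (B *ᵥ p)))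
      = (B *ᵥ p) ⬝ᵥ ((B * Bᵀ)⁻¹ *ᵥ (B *ᵥ p)) := by
  set u := (B * Bᵀ)⁻¹ *ᵥ (B *ᵥ p) with hu
  rw [dotProduct_mulVec, vecMul_transpose, mulVec_mulVec, hu, mulVec_mulVec,
    Matrix.mul_nonsing_inv _ h, one_mulVec]

lemma aux_proj_ker (h : IsUnit (B * Bᵀ).det) :
    B *ᵥ (p - Bᵀ *ᵥ ((B * Bᵀ)⁻¹ *ᵥ (B *ᵥ p))) = 0 := by
  rw [mulVec_sub, mulVec_mulVec, mulVec_mulVec,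
    Matrix.mul_nonsing_inv _ h, one_mulVec, sub_self]

lemma aux_lower_bound (h : IsUnit (B * Bᵀ).det) (q : Fin N → ℝ) (hq : B *ᵥ q = 0) :
    (B *ᵥ p) ⬝ᵥ ((B * Bᵀ)⁻¹ *ᵥ (B *ᵥ p)) ≤ (p - q) ⬝ᵥ (p - q) := by
  set u := (B * Bᵀ)⁻¹ *ᵥ (B *ᵥ p) with hu
  set q0 := Bᵀ *ᵥ u with hq0
  set s := (B *ᵥ p) ⬝ᵥ u with hs
  set w := p - q with hw
  have hBw : B *ᵥ w = B *ᵥ p := by rw [hw, mulVec_sub, hq, sub_zero]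
  have h1 : w ⬝ᵥ q0 = s := by
    rw [hq0, dotProduct_mulVec, vecMul_transpose, hBw]
  have h2 : q0 ⬝ᵥ q0 = s := aux_proj_norm B p h
  have hs0 : 0 ≤ s := by
    rw [← h2]; exact Finset.sum_nonneg fun i _ => mul_self_nonneg _
  rcases eq_or_lt_of_le hs0 with hz | hpos
  · rw [← hz]; exact Finset.sum_nonneg fun i _ => mul_self_nonneg _
  · have hcs := Finset.sum_mul_sq_le_sq_mul_sq Finset.univ w q0
    have : (w ⬝ᵥ q0) ^ 2 ≤ (w ⬝ᵥ w) * (q0 ⬝ᵥ q0) := by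
      simpa [dotProduct, sq, Finset.mul_sum, Finset.sum_mul, mul_pow] using hcs
    rw [h1, h2, sq] at this
    exact le_of_mul_le_mul_right this hpos

end LA

/-! ### Euler's identity for homogeneous polynomials -/

lemma aux_euler_eval {n d : ℕ} (P : MvPolynomial (Fin n) ℝ) (hP : P.IsHomogeneous d)
    (x : Fin n → ℝ) : (d : ℝ) * eval x P = ∑ i, x i * eval x (pderiv i P) := by
  conv_lhs => rw [P.as_sum]
  conv_rhs => rw [P.as_sum]
  rw [map_sum, Finset.mul_sum]
  have : ∀ i, eval x (pderiv i (∑ v ∈ P.support, monomial v (coeff v P)))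
      = ∑ v ∈ P.support, eval x (pderiv i (monomial v (coeff v P))) := by
    intro i; rw [map_sum, map_sum]
  simp_rw [this, Finset.mul_sum]
  rw [Finset.sum_comm]
  refine Finset.sum_congr rfl fun u hu => ?_
  have hdeg : ∑ j, u j = d := by
    have := hP (mem_support_iff.mp hu)
    rw [← this, Finsupp.weight_apply, Finsupp.sum_fintype]
    · simp
    · simp
  set c := coeff u P with hc
  have hev : ∀ (v : Fin n →₀ ℕ) (a : ℝ), eval x (monomial v a) = a * ∏ j, x j ^ v j := by
    intro v a
    rw [eval_monomial, Finsupp.prod_fintype _ _ fun i => pow_zero _]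
  have hterm : ∀ i, x i * eval x (pderiv i (monomial u c))
      = (u i : ℝ) * (c * ∏ j, x j ^ u j) := by
    intro i
    rw [pderiv_monomial, hev]
    set v : Fin n →₀ ℕ := u - Finsupp.single i 1 with hv
    rcases Nat.eq_zero_or_pos (u i) with h0 | hpos
    · simp [h0]
    · have hsub : ∀ j, v j = if j = i then u i - 1 else u j := by
        intro j
        rw [hv, Finsupp.tsub_apply, Finsupp.single_apply]
        by_cases hj : j = i
        · subst hj; simp
        · rw [if_neg hj, if_neg fun h => hj h.symm, Nat.sub_zero]
      have hprod : x i * ∏ j, x j ^ v j = ∏ j, x j ^ u j := by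
        rw [Finset.prod_eq_prod_diff_singleton_mul (Finset.mem_univ i)
            (fun j => x j ^ v j),
          Finset.prod_eq_prod_diff_singleton_mul (Finset.mem_univ i)
            (fun j => x j ^ u j)]
        have h1 : ∀ j ∈ Finset.univ \ {i}, x j ^ v j = x j ^ u j := by
          intro j hj
          rw [hsub j, if_neg (by simpa using (Finset.mem_sdiff.mp hj).2)]
        rw [Finset.prod_congr rfl h1]
        rw [hsub i, if_pos rfl]
        have : x i ^ u i = x i ^ (u i - 1) * x i := by
          conv_lhs => rw [← Nat.succ_pred_eq_of_pos hpos]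
          rw [pow_succ, Nat.pred_eq_sub_one]
        rw [this]
        ring
      calc x i * (c * ↑(u i) * ∏ j, x j ^ v j)
          = (u i : ℝ) * (c * (x i * ∏ j, x j ^ v j)) := by ring
        _ = (u i : ℝ) * (c * ∏ j, x j ^ u j) := by rw [hprod]
  rw [Finset.sum_congr rfl fun i _ => hterm i, ← Finset.sum_mul, hev]
  have : (∑ i, (u i : ℝ)) = (d : ℝ) := by
    rw [← hdeg]; push_cast [Finset.sum_congr]; ring
  rw [this]

/-! ### The gradient as a linear map, coordinates, orthonormality -/

noncomputable def Dmap (n d : ℕ) (x : Fin n → ℝ) (i : Fin n) :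
    (MvPolynomial.homogeneousSubmodule (Fin n) ℝ d) →ₗ[ℝ] ℝ :=
  (MvPolynomial.aeval x).toLinearMap ∘ₗ (pderiv i).toLinearMap
    ∘ₗ (MvPolynomial.homogeneousSubmodule (Fin n) ℝ d).subtype

lemma Dmap_apply (n d : ℕ) (x : Fin n → ℝ) (i : Fin n)
    (R : MvPolynomial.homogeneousSubmodule (Fin n) ℝ d) :
    Dmap n d x i R = eval x (pderiv i (R : MvPolynomial (Fin n) ℝ)) := by
  simp only [Dmap, LinearMap.coe_comp, Function.comp_apply, Submodule.coe_subtype,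
    AlgHom.toLinearMap_apply, Derivation.coeFn_coe]
  rw [show (aeval x : MvPolynomial (Fin n) ℝ →ₐ[ℝ] ℝ) ((pderiv i) (R : MvPolynomial (Fin n) ℝ))
      = (RingHomClass.toRingHom (aeval x)) ((pderiv i) (R : MvPolynomial (Fin n) ℝ)) from rfl,
    MvPolynomial.coe_aeval_eq_eval]

lemma aux_grad_eq (n d N : ℕ)
    (b : Module.Basis (Fin N) ℝ (MvPolynomial.homogeneousSubmodule (Fin n) ℝ d))
    (x : Fin n → ℝ) (R : MvPolynomial.homogeneousSubmodule (Fin n) ℝ d) :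
    (fun i => eval x (pderiv i ((R : MvPolynomial (Fin n) ℝ))))
      = (Bmat n d N b x) *ᵥ (b.equivFun R) := by
  funext i
  have hR : R = ∑ j, b.equivFun R j • b j := by
    rw [← b.equivFun_symm_apply, LinearEquiv.symm_apply_apply]
  rw [← Dmap_apply]
  conv_lhs => rw [hR]
  rw [map_sum]
  simp only [_root_.map_smul, smul_eq_mul, Dmap_apply]
  simp [Matrix.mulVec, dotProduct, Bmat, mul_comm]

lemma aux_Phi_eq (n d N : ℕ)
    (Φ : (MvPolynomial.homogeneousSubmodule (Fin n) ℝ d) →ₗ[ℝ]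
         (MvPolynomial.homogeneousSubmodule (Fin n) ℝ d) →ₗ[ℝ] ℝ)
    (b : Module.Basis (Fin N) ℝ (MvPolynomial.homogeneousSubmodule (Fin n) ℝ d))
    (hortho : ∀ i j, Φ (b i) (b j) = if i = j then (1 : ℝ) else 0)
    (R S : MvPolynomial.homogeneousSubmodule (Fin n) ℝ d) :
    Φ R S = (b.equivFun R) ⬝ᵥ (b.equivFun S) := by
  have hR : R = ∑ j, b.equivFun R j • b j := by
    rw [← b.equivFun_symm_apply, LinearEquiv.symm_apply_apply]
  have hS : S = ∑ j, b.equivFun S j • b j := by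
    rw [← b.equivFun_symm_apply, LinearEquiv.symm_apply_apply]
  conv_lhs => rw [hR, hS]
  simp only [map_sum, LinearMap.sum_apply, _root_.map_smul, LinearMap.smul_apply,
    smul_eq_mul, hortho, mul_ite, mul_one, mul_zero]
  simp [dotProduct, Finset.sum_ite_eq, Finset.sum_ite_eq', mul_comm]

/-! ### Full rank of `B(x)` for `x ≠ 0` -/

lemma aux_Bfullrank (n d N : ℕ) (hd : 2 ≤ d)
    (b : Module.Basis (Fin N) ℝ (MvPolynomial.homogeneousSubmodule (Fin n) ℝ d))
    (x : Fin n → ℝ) (hx : x ≠ 0) :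
    IsUnit (Bmat n d N b x * (Bmat n d N b x)ᵀ).det := by
  obtain ⟨k, hk⟩ : ∃ k, x k ≠ 0 := by
    by_contra h; push_neg at h; exact hx (funext h)
  rw [isUnit_iff_ne_zero]
  intro h0
  obtain ⟨v, hv0, hv⟩ := (Matrix.exists_mulVec_eq_zero_iff).mpr h0
  set B := Bmat n d N b x with hB
  have hBt : Bᵀ *ᵥ v = 0 := by
    have h1 : (Bᵀ *ᵥ v) ⬝ᵥ (Bᵀ *ᵥ v) = 0 := by
      rw [dotProduct_mulVec, vecMul_transpose, mulVec_mulVec, hv, zero_dotProduct]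
    have h2 := (Finset.sum_eq_zero_iff_of_nonneg
      (fun j _ => mul_self_nonneg ((Bᵀ *ᵥ v) j))).mp h1
    funext j
    exact mul_self_eq_zero.mp (h2 j (Finset.mem_univ j))
  have hall : ∀ R : MvPolynomial.homogeneousSubmodule (Fin n) ℝ d,
      ∑ i, v i * eval x (pderiv i ((R : MvPolynomial (Fin n) ℝ))) = 0 := by
    have hlin : (∑ i, v i • Dmap n d x i) = (0 : _ →ₗ[ℝ] ℝ) := by
      apply b.ext
      intro j
      simp only [LinearMap.sum_apply, LinearMap.smul_apply, smul_eq_mul, Dmap_apply,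
        LinearMap.zero_apply]
      have := congrFun hBt j
      simpa [Matrix.mulVec, dotProduct, Matrix.transpose_apply, hB, Bmat,
        mul_comm] using this
    intro R
    have := LinearMap.congr_fun hlin R
    simpa [LinearMap.sum_apply, LinearMap.smul_apply, smul_eq_mul, Dmap_apply] using this
  obtain ⟨e, rfl⟩ : ∃ e, d = e + 2 := ⟨d - 2, by omega⟩
  have hQmem : ∀ i : Fin n,
      (X k ^ (e+1) * X i : MvPolynomial (Fin n) ℝ) ∈
        MvPolynomial.homogeneousSubmodule (Fin n) ℝ (e+2) := by
    intro i
    rw [mem_homogeneousSubmodule]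
    have := ((isHomogeneous_X ℝ k).pow (e+1)).mul (isHomogeneous_X ℝ i)
    simpa using this
  have hgradQ : ∀ i m : Fin n,
      eval x (pderiv m (X k ^ (e+1) * X i : MvPolynomial (Fin n) ℝ))
      = (if m = k then (e+1 : ℝ) * x k ^ e * x i else 0)
        + (if m = i then x k ^ (e+1) else 0) := by
    intro i m
    rw [pderiv_mul, (pderiv m).leibniz_pow]
    by_cases hmk : m = k <;> by_cases hmi : m = i <;>
      simp [pderiv_X, Pi.single_apply, hmk, hmi, eq_comm, apply_ite (eval x)]
  have hsum : ∀ i : Fin n,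
      v k * ((e+1 : ℝ) * x k ^ e * x i) + v i * x k ^ (e+1) = 0 := by
    intro i
    have h1 := hall ⟨_, hQmem i⟩
    simp only [hgradQ i, mul_add, mul_ite, mul_zero, Finset.sum_add_distrib,
      Finset.sum_ite_eq', Finset.mem_univ, if_true] at h1
    exact h1
  have hvk : v k = 0 := by
    have h1 := hsum k
    have hne : ((e : ℝ) + 2) * x k ^ (e+1) ≠ 0 :=
      mul_ne_zero (by positivity) (pow_ne_zero _ hk)
    have : v k * (((e : ℝ) + 2) * x k ^ (e+1)) = 0 := by
      rw [← h1, pow_succ]; ring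
    exact (mul_eq_zero.mp this).resolve_right hne
  apply hv0
  funext i
  have h1 := hsum i
  rw [hvk, zero_mul, zero_add] at h1
  exact (mul_eq_zero.mp h1).resolve_right (pow_ne_zero _ hk)

/-- for any inner product `Φ` on the space `E` of homogeneous polynomials of
degree `d` in `n` variables with orthonormal basis `(E_1,…,E_N)`, the matrix
`A(x) = B(x)·ᵗB(x)` is symmetric and invertible for `x ≠ 0`, and the distance from any
`P ∈ E` to the real discriminant `Δ` in the associated norm equals
`min_{x ∈ S^{n-1}} √(ᵗ∇P(x)·M(x)·∇P(x))` where `M(x) = A(x)⁻¹`. -/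
theorem distance_to_discriminant_general (n d N : ℕ) (hn : 1 < n) (hd : 1 < d)
    (hN : N = (d + n - 1).choose (n - 1))
    (Φ : (MvPolynomial.homogeneousSubmodule (Fin n) ℝ d) →ₗ[ℝ]
         (MvPolynomial.homogeneousSubmodule (Fin n) ℝ d) →ₗ[ℝ] ℝ)
    (hsymm : ∀ p q, Φ p q = Φ q p)
    (hposdef : ∀ p, p ≠ 0 → 0 < Φ p p)
    (b : Module.Basis (Fin N) ℝ (MvPolynomial.homogeneousSubmodule (Fin n) ℝ d))
    (hortho : ∀ i j, Φ (b i) (b j) = if i = j then (1 : ℝ) else 0)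
    (P : MvPolynomial.homogeneousSubmodule (Fin n) ℝ d) :
    (∀ x : Fin n → ℝ, x ≠ 0 →
        (Bmat n d N b x * (Bmat n d N b x)ᵀ)ᵀ = Bmat n d N b x * (Bmat n d N b x)ᵀ
        ∧ IsUnit (Bmat n d N b x * (Bmat n d N b x)ᵀ).det)
    ∧ IsLeast
        {r : ℝ | ∃ x : Fin n → ℝ, (∑ i, x i ^ 2) = 1 ∧
          r = Real.sqrt (dotProduct
                (fun i => eval x (pderiv i ((P : MvPolynomial (Fin n) ℝ))))
                ((Mmat n d N b x).mulVec
                  (fun i => eval x (pderiv i ((P : MvPolynomial (Fin n) ℝ))))))}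
        (sInf {r : ℝ | ∃ Q : MvPolynomial.homogeneousSubmodule (Fin n) ℝ d,
          (∃ x : Fin n → ℝ, (∑ i, x i ^ 2) = 1 ∧
            eval x ((Q : MvPolynomial (Fin n) ℝ)) = 0 ∧
            ∀ i, eval x (pderiv i ((Q : MvPolynomial (Fin n) ℝ))) = 0) ∧
          r = Real.sqrt (Φ (P - Q) (P - Q))}) := by
  have hd2 : 2 ≤ d := hd
  refine ⟨fun x hx => ⟨by rw [transpose_mul, transpose_transpose],
    aux_Bfullrank n d N hd2 b x hx⟩, ?_⟩
  -- notation
  set p : Fin N → ℝ := b.equivFun P with hp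
  set A : (Fin n → ℝ) → Matrix (Fin n) (Fin n) ℝ :=
    fun x => Bmat n d N b x * (Bmat n d N b x)ᵀ with hA
  set sfun : (Fin n → ℝ) → ℝ :=
    fun x => (Bmat n d N b x *ᵥ p) ⬝ᵥ ((A x)⁻¹ *ᵥ (Bmat n d N b x *ᵥ p)) with hsfun
  set S : Set (Fin n → ℝ) := {x | (∑ i, x i ^ 2) = 1} with hS
  have hxne : ∀ x ∈ S, x ≠ 0 := by
    rintro x hx rfl
    simp [hS] at hx
  have hunit : ∀ x ∈ S, IsUnit (A x).det :=
    fun x hx => aux_Bfullrank n d N hd2 b x (hxne x hx)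
  -- the value in the statement equals `√(sfun x)`
  have hexpr : ∀ x : Fin n → ℝ,
      Real.sqrt (dotProduct
        (fun i => eval x (pderiv i ((P : MvPolynomial (Fin n) ℝ))))
        ((Mmat n d N b x).mulVec
          (fun i => eval x (pderiv i ((P : MvPolynomial (Fin n) ℝ))))))
      = Real.sqrt (sfun x) := by
    intro x
    rw [aux_grad_eq n d N b x P]
    rfl
  -- `sfun` is nonneg-valued where A is invertible (used implicitly via sqrt) and
  -- each `√(sfun x)` is realised by an explicit element of the discriminant
  have hmemD : ∀ x, x ∈ S →
      ∃ Q : MvPolynomial.homogeneousSubmodule (Fin n) ℝ d,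
        (∃ y : Fin n → ℝ, (∑ i, y i ^ 2) = 1 ∧
          eval y ((Q : MvPolynomial (Fin n) ℝ)) = 0 ∧
          ∀ i, eval y (pderiv i ((Q : MvPolynomial (Fin n) ℝ))) = 0) ∧
        Real.sqrt (Φ (P - Q) (P - Q)) = Real.sqrt (sfun x) := by
    intro x hxS
    have hU := hunit x hxS
    set B := Bmat n d N b x with hB
    set q0 : Fin N → ℝ := Bᵀ *ᵥ ((A x)⁻¹ *ᵥ (B *ᵥ p)) with hq0
    set Q : MvPolynomial.homogeneousSubmodule (Fin n) ℝ d := b.equivFun.symm (p - q0) with hQ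
    have hcQ : b.equivFun Q = p - q0 := by rw [hQ, LinearEquiv.apply_symm_apply]
    have hQgrad : ∀ i, eval x (pderiv i ((Q : MvPolynomial (Fin n) ℝ))) = 0 := by
      intro i
      have h1 := congrFun (aux_grad_eq n d N b x Q) i
      rw [h1, hcQ]
      have := aux_proj_ker B p hU
      rw [show B *ᵥ (p - q0) = 0 from this]
      rfl
    have hQeval : eval x ((Q : MvPolynomial (Fin n) ℝ)) = 0 := by
      have hhom : ((Q : MvPolynomial (Fin n) ℝ)).IsHomogeneous d :=
        (mem_homogeneousSubmodule _ _).mp Q.2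
      have heuler := aux_euler_eval (Q : MvPolynomial (Fin n) ℝ) hhom x
      have hz : ∑ i, x i * eval x (pderiv i ((Q : MvPolynomial (Fin n) ℝ))) = 0 := by
        refine Finset.sum_eq_zero fun i _ => ?_
        rw [hQgrad i, mul_zero]
      rw [hz] at heuler
      have hdne : (d : ℝ) ≠ 0 := by positivity
      exact (mul_eq_zero.mp heuler).resolve_left hdne
    refine ⟨Q, ⟨x, hxS, hQeval, hQgrad⟩, ?_⟩
    have hrepr : b.equivFun (P - Q) = q0 := by
      rw [map_sub, hcQ, ← hp, sub_sub_cancel]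
    rw [aux_Phi_eq n d N Φ b hortho, hrepr]
    rw [show q0 ⬝ᵥ q0 = sfun x from aux_proj_norm B p hU]
  -- lower bound for elements of the distance set
  have hlow : ∀ x, x ∈ S → ∀ Q : MvPolynomial.homogeneousSubmodule (Fin n) ℝ d,
      (∀ i, eval x (pderiv i ((Q : MvPolynomial (Fin n) ℝ))) = 0) →
      sfun x ≤ Φ (P - Q) (P - Q) := by
    intro x hxS Q hQg
    have hU := hunit x hxS
    have hq : Bmat n d N b x *ᵥ b.equivFun Q = 0 := by
      rw [← aux_grad_eq n d N b x Q]
      funext i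
      exact hQg i
    have h1 := aux_lower_bound (Bmat n d N b x) p hU (b.equivFun Q) hq
    rw [aux_Phi_eq n d N Φ b hortho, map_sub, ← hp]
    exact h1
  -- compactness: the sphere is compact and `sfun` is continuous on it
  have hSclosed : IsClosed S := by
    have : S = (fun x : Fin n → ℝ => ∑ i, x i ^ 2) ⁻¹' {1} := rfl
    rw [this]
    exact IsClosed.preimage (continuous_finset_sum _ fun i _ => (continuous_apply i).pow 2)
      isClosed_singleton
  have hScomp : IsCompact S := by
    refine IsCompact.of_isClosed_subset (isCompact_univ_pi
      (fun i => isCompact_Icc (a := (-1 : ℝ)) (b := 1))) hSclosed ?_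
    intro x hx
    have hsq : ∀ i, x i ^ 2 ≤ 1 := by
      intro i
      rw [← hx]
      exact Finset.single_le_sum (fun j _ => sq_nonneg (x j)) (Finset.mem_univ i)
    intro i _
    constructor
    · nlinarith [hsq i]
    · nlinarith [hsq i]
  have hSne : S.Nonempty := by
    have h0 : (0 : ℕ) < n := by omega
    refine ⟨fun j => if j = (⟨0, h0⟩ : Fin n) then (1:ℝ) else 0, ?_⟩
    show (∑ j, (if j = (⟨0, h0⟩ : Fin n) then (1:ℝ) else 0) ^ 2) = 1
    have hterm : ∀ j : Fin n, (if j = (⟨0, h0⟩ : Fin n) then (1:ℝ) else 0) ^ 2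
        = if j = (⟨0, h0⟩ : Fin n) then (1:ℝ) else 0 := by
      intro j; by_cases h : j = (⟨0, h0⟩ : Fin n) <;> simp [h]
    rw [Finset.sum_congr rfl fun j _ => hterm j, Finset.sum_ite_eq' Finset.univ]
    simp
  have hBcont : ∀ i j, Continuous fun x => Bmat n d N b x i j := by
    intro i j
    exact MvPolynomial.continuous_eval _
  have hAcont : Continuous A := by
    apply continuous_matrix
    intro i j
    have : (fun x => A x i j) = fun x => ∑ l, Bmat n d N b x i l * Bmat n d N b x j l := by
      funext x
      rw [hA]
      simp [Matrix.mul_apply, Matrix.transpose_apply]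
    rw [this]
    exact continuous_finset_sum _ fun l _ => (hBcont i l).mul (hBcont j l)
  have hgcont : ∀ i, Continuous fun x => (Bmat n d N b x *ᵥ p) i := by
    intro i
    have : (fun x => (Bmat n d N b x *ᵥ p) i) = fun x => ∑ j, Bmat n d N b x i j * p j := by
      funext x; rfl
    rw [this]
    exact continuous_finset_sum _ fun j _ => (hBcont i j).mul continuous_const
  have hdetne : ∀ x ∈ S, (A x).det ≠ 0 :=
    fun x hx => isUnit_iff_ne_zero.mp (hunit x hx)
  have hMcont : ∀ i j, ContinuousOn (fun x => ((A x)⁻¹) i j) S := by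
    intro i j
    have heq : ∀ x : Fin n → ℝ, ((A x)⁻¹) i j = ((A x).det)⁻¹ * ((A x).adjugate) i j := by
      intro x
      rw [Matrix.inv_def, Matrix.smul_apply, Ring.inverse_eq_inv', smul_eq_mul]
    have : (fun x => ((A x)⁻¹) i j) = fun x => ((A x).det)⁻¹ * ((A x).adjugate) i j := by
      funext x; exact heq x
    rw [this]
    refine ContinuousOn.mul ?_ ?_
    · exact (hAcont.matrix_det.continuousOn).inv₀ hdetne
    · exact ((hAcont.matrix_adjugate).matrix_elem i j).continuousOn
  have hscont : ContinuousOn sfun S := by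
    have : sfun = fun x => ∑ i, (Bmat n d N b x *ᵥ p) i
        * ∑ j, ((A x)⁻¹) i j * (Bmat n d N b x *ᵥ p) j := by
      funext x
      rw [hsfun]
      simp [dotProduct, Matrix.mulVec]
    rw [this]
    refine continuousOn_finset_sum _ fun i _ => ContinuousOn.mul ((hgcont i).continuousOn) ?_
    exact continuousOn_finset_sum _ fun j _ =>
      ContinuousOn.mul (hMcont i j) ((hgcont j).continuousOn)
  obtain ⟨x₀, hx₀S, hx₀min⟩ := hScomp.exists_isMinOn hSne hscont
  -- the distance set
  set D : Set ℝ := {r : ℝ | ∃ Q : MvPolynomial.homogeneousSubmodule (Fin n) ℝ d,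
      (∃ x : Fin n → ℝ, (∑ i, x i ^ 2) = 1 ∧
        eval x ((Q : MvPolynomial (Fin n) ℝ)) = 0 ∧
        ∀ i, eval x (pderiv i ((Q : MvPolynomial (Fin n) ℝ))) = 0) ∧
      r = Real.sqrt (Φ (P - Q) (P - Q))} with hD
  have hmemD' : ∀ x ∈ S, Real.sqrt (sfun x) ∈ D := by
    intro x hx
    obtain ⟨Q, hQ, hval⟩ := hmemD x hx
    exact ⟨Q, hQ, hval.symm⟩
  have hlbD : ∀ r ∈ D, Real.sqrt (sfun x₀) ≤ r := by
    rintro r ⟨Q, ⟨x, hxS, _, hxg⟩, rfl⟩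
    have h1 : sfun x₀ ≤ sfun x := hx₀min hxS
    have h2 : sfun x ≤ Φ (P - Q) (P - Q) := hlow x hxS Q hxg
    exact Real.sqrt_le_sqrt (le_trans h1 h2)
  have hbdd : BddBelow D := by
    refine ⟨0, ?_⟩
    rintro r ⟨Q, _, rfl⟩
    exact Real.sqrt_nonneg _
  have hDne : D.Nonempty := ⟨_, hmemD' x₀ hx₀S⟩
  have hinf : sInf D = Real.sqrt (sfun x₀) :=
    le_antisymm (csInf_le hbdd (hmemD' x₀ hx₀S)) (le_csInf hDne hlbD)
  constructor
  · exact ⟨x₀, hx₀S, by rw [hinf, hexpr x₀]⟩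
  · rintro r ⟨x, hxS, rfl⟩
    rw [hinf, hexpr x]
    exact Real.sqrt_le_sqrt (hx₀min hxS)
end

section
/- The Bombieri norm is invariant under composition with the orthogonal group: for every homogeneous polynomial P of degree d in n variables and every orthogonal linear map h ∈ O(n), the polynomial P ∘ h is homogeneous of degree d and ‖P ∘ h‖ = ‖P‖, where ‖·‖ is the Bombieri norm. -/
open MvPolynomial Finset

noncomputable def bombieriInner (n d : ℕ) (P Q : MvPolynomial (Fin n) ℝ) : ℝ :=
  ∑ α ∈ P.support, P.coeff α * Q.coeff α *
    (((∏ i, Nat.factorial (α i) : ℕ) : ℝ) / (Nat.factorial d : ℝ))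

noncomputable def bombieriNorm (n d : ℕ) (P : MvPolynomial (Fin n) ℝ) : ℝ :=
  Real.sqrt (bombieriInner n d P P)

def realDisc (n d : ℕ) : Set (MvPolynomial (Fin n) ℝ) :=
  {P | P.IsHomogeneous d ∧ ∃ x : Fin n → ℝ, (∑ i, x i ^ 2) = 1 ∧
    eval x P = 0 ∧ ∀ i, eval x (pderiv i P) = 0}

noncomputable def distDisc (n d : ℕ) (P : MvPolynomial (Fin n) ℝ) : ℝ :=
  sInf {r | ∃ Q ∈ realDisc n d, r = bombieriNorm n d (P - Q)}

namespace BombieriAux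

open Matrix

variable {n : ℕ}

/-- The factorial weight. -/
noncomputable def wfact (α : Fin n →₀ ℕ) : ℝ := ((∏ i, Nat.factorial (α i) : ℕ) : ℝ)

/-- Weighted pairing of coefficients. -/
noncomputable def wap (w : (Fin n →₀ ℕ) → ℝ) (P Q : MvPolynomial (Fin n) ℝ) : ℝ :=
  ∑ α ∈ P.support ∪ Q.support, P.coeff α * Q.coeff α * w α

lemma wap_eq_sum {w : (Fin n →₀ ℕ) → ℝ} {P Q : MvPolynomial (Fin n) ℝ}
    {S : Finset (Fin n →₀ ℕ)} (hS : P.support ∪ Q.support ⊆ S) :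
    wap w P Q = ∑ α ∈ S, P.coeff α * Q.coeff α * w α := by
  refine Finset.sum_subset hS fun α _ hα => ?_
  rcases Finset.notMem_union.mp hα with ⟨h1, _⟩
  rw [MvPolynomial.notMem_support_iff.mp h1, zero_mul, zero_mul]

lemma wap_comm {w : (Fin n →₀ ℕ) → ℝ} (P Q : MvPolynomial (Fin n) ℝ) :
    wap w P Q = wap w Q P := by
  rw [wap, wap, Finset.union_comm]
  exact Finset.sum_congr rfl fun α _ => by ring

lemma wap_zero_left {w : (Fin n →₀ ℕ) → ℝ} (Q : MvPolynomial (Fin n) ℝ) :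
    wap w 0 Q = 0 := by
  simp [wap]

lemma wap_add_left {w : (Fin n →₀ ℕ) → ℝ} (P P' Q : MvPolynomial (Fin n) ℝ) :
    wap w (P + P') Q = wap w P Q + wap w P' Q := by
  classical
  set S := (P.support ∪ P'.support) ∪ Q.support with hSdef
  have h1 : (P + P').support ∪ Q.support ⊆ S :=
    Finset.union_subset_union_left (MvPolynomial.support_add)
  have h2 : P.support ∪ Q.support ⊆ S :=
    Finset.union_subset_union_left (Finset.subset_union_left)
  have h3 : P'.support ∪ Q.support ⊆ S :=
    Finset.union_subset_union_left (Finset.subset_union_right)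
  rw [wap_eq_sum h1, wap_eq_sum h2, wap_eq_sum h3, ← Finset.sum_add_distrib]
  exact Finset.sum_congr rfl fun α _ => by rw [MvPolynomial.coeff_add]; ring

lemma wap_smul_left {w : (Fin n →₀ ℕ) → ℝ} (c : ℝ) (P Q : MvPolynomial (Fin n) ℝ) :
    wap w (c • P) Q = c * wap w P Q := by
  have h1 : (c • P).support ∪ Q.support ⊆ P.support ∪ Q.support :=
    Finset.union_subset_union_left (MvPolynomial.support_smul)
  rw [wap_eq_sum h1, wap, Finset.mul_sum]
  refine Finset.sum_congr rfl fun α _ => ?_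
  rw [MvPolynomial.coeff_smul, smul_eq_mul]
  ring

lemma wap_C_mul_left {w : (Fin n →₀ ℕ) → ℝ} (c : ℝ) (P Q : MvPolynomial (Fin n) ℝ) :
    wap w (MvPolynomial.C c * P) Q = c * wap w P Q := by
  rw [MvPolynomial.C_mul', wap_smul_left]

lemma wap_sum_left {w : (Fin n →₀ ℕ) → ℝ} {ι : Type*} (s : Finset ι)
    (f : ι → MvPolynomial (Fin n) ℝ) (Q : MvPolynomial (Fin n) ℝ) :
    wap w (∑ i ∈ s, f i) Q = ∑ i ∈ s, wap w (f i) Q := by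
  classical
  induction s using Finset.induction_on with
  | empty => simpa using wap_zero_left Q
  | insert _ _ hx ih =>
      rw [Finset.sum_insert hx, Finset.sum_insert hx, wap_add_left, ih]

lemma wap_sum_right {w : (Fin n →₀ ℕ) → ℝ} {ι : Type*} (s : Finset ι)
    (f : ι → MvPolynomial (Fin n) ℝ) (Q : MvPolynomial (Fin n) ℝ) :
    wap w Q (∑ i ∈ s, f i) = ∑ i ∈ s, wap w Q (f i) := by
  rw [wap_comm, wap_sum_left]
  exact Finset.sum_congr rfl fun i _ => wap_comm _ _

lemma wap_C_mul_right {w : (Fin n →₀ ℕ) → ℝ} (c : ℝ) (P Q : MvPolynomial (Fin n) ℝ) :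
    wap w Q (MvPolynomial.C c * P) = c * wap w Q P := by
  rw [wap_comm, wap_C_mul_left, wap_comm]

lemma wap_monomial {w : (Fin n →₀ ℕ) → ℝ} (α β : Fin n →₀ ℕ) (a b : ℝ) :
    wap w (MvPolynomial.monomial α a) (MvPolynomial.monomial β b)
      = if α = β then a * b * w α else 0 := by
  classical
  have hS : (MvPolynomial.monomial α a).support ∪ (MvPolynomial.monomial β b).support
      ⊆ ({α, β} : Finset (Fin n →₀ ℕ)) := by
    apply Finset.union_subset
    · exact (MvPolynomial.support_monomial_subset).trans (by simp)
    · exact (MvPolynomial.support_monomial_subset).trans (by simp)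
  rw [wap_eq_sum hS]
  rcases eq_or_ne α β with rfl | hne
  · simp [MvPolynomial.coeff_monomial]
  · rw [Finset.sum_pair hne]
    simp [MvPolynomial.coeff_monomial, hne, hne.symm, if_neg hne]

/-- The apolar pairing. -/
noncomputable def apolar (P Q : MvPolynomial (Fin n) ℝ) : ℝ := wap wfact P Q

lemma apolar_def (P Q : MvPolynomial (Fin n) ℝ) : apolar P Q = wap wfact P Q := rfl

/-- degree as a sum over all variables. -/
lemma degree_eq_sum_univ (α : Fin n →₀ ℕ) : α.degree = ∑ i, α i := by
  rw [Finsupp.degree]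
  exact Finset.sum_subset (Finset.subset_univ _)
    (fun i _ hi => Finsupp.notMem_support_iff.mp hi)

lemma degree_of_coeff_ne_zero {P : MvPolynomial (Fin n) ℝ} {d : ℕ}
    (hP : P.IsHomogeneous d) {α : Fin n →₀ ℕ} (hα : P.coeff α ≠ 0) :
    α.degree = d := by
  by_contra hne
  exact hα (hP.coeff_eq_zero hne)

lemma eq_C_of_isHomogeneous_zero {P : MvPolynomial (Fin n) ℝ}
    (hP : P.IsHomogeneous 0) : P = MvPolynomial.C (MvPolynomial.coeff 0 P) := by
  classical
  apply MvPolynomial.ext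
  intro β
  rw [MvPolynomial.coeff_C]
  split_ifs with hβ
  · rw [← hβ]
  · by_contra hc
    have hdeg := degree_of_coeff_ne_zero hP hc
    exact hβ ((Finsupp.degree_eq_zero_iff β).mp hdeg).symm

lemma wap_congr_weight {w w' : (Fin n →₀ ℕ) → ℝ} {P Q : MvPolynomial (Fin n) ℝ}
    (h : ∀ α, P.coeff α ≠ 0 → w α = w' α) :
    wap w P Q = wap w' P Q := by
  refine Finset.sum_congr rfl fun α _ => ?_
  by_cases hc : P.coeff α = 0
  · simp [hc]
  · rw [h α hc]

lemma wap_weight_mul_const {w : (Fin n →₀ ℕ) → ℝ} (c : ℝ) (P Q : MvPolynomial (Fin n) ℝ) :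
    wap (fun α => w α * c) P Q = c * wap w P Q := by
  rw [wap, wap, Finset.mul_sum]
  exact Finset.sum_congr rfl fun α _ => by ring

lemma sub_single_apply_self (α : Fin n →₀ ℕ) (i : Fin n) :
    (α - Finsupp.single i 1 : Fin n →₀ ℕ) i = α i - 1 := by
  rw [Finsupp.tsub_apply, Finsupp.single_eq_same]

lemma sub_single_apply_ne (α : Fin n →₀ ℕ) {i j : Fin n} (hj : j ≠ i) :
    (α - Finsupp.single i 1 : Fin n →₀ ℕ) j = α j := by
  rw [Finsupp.tsub_apply, Finsupp.single_eq_of_ne' (Ne.symm hj), Nat.sub_zero]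

lemma mul_wfact_sub_single {α : Fin n →₀ ℕ} {i : Fin n} (hpos : 0 < α i) :
    (α i : ℝ) * wfact (α - Finsupp.single i 1) = wfact α := by
  have hN : α i * ∏ j, Nat.factorial ((α - Finsupp.single i 1 : Fin n →₀ ℕ) j)
      = ∏ j, Nat.factorial (α j) := by
    rw [← Finset.mul_prod_erase Finset.univ
      (fun j => Nat.factorial ((α - Finsupp.single i 1 : Fin n →₀ ℕ) j)) (Finset.mem_univ i),
      ← Finset.mul_prod_erase Finset.univ
      (fun j => Nat.factorial (α j)) (Finset.mem_univ i),
      ← mul_assoc, sub_single_apply_self, Nat.mul_factorial_pred hpos.ne']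
    congr 1
    exact Finset.prod_congr rfl fun j hj =>
      by rw [sub_single_apply_ne α (Finset.ne_of_mem_erase hj)]
  rw [wfact, wfact]
  exact_mod_cast congrArg (Nat.cast : ℕ → ℝ) hN

/-- Key monomial computation for the derivative recursion. -/
lemma sum_apolar_pderiv_monomial (α β : Fin n →₀ ℕ) (a b : ℝ) :
    ∑ i, apolar (pderiv i (MvPolynomial.monomial α a))
        (pderiv i (MvPolynomial.monomial β b))
      = wap (fun γ => wfact γ * (γ.degree : ℝ))
          (MvPolynomial.monomial α a) (MvPolynomial.monomial β b) := by
  classical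
  rw [wap_monomial]
  rcases eq_or_ne α β with rfl | hne
  · rw [if_pos rfl]
    have key : ∀ i : Fin n,
        apolar (pderiv i (MvPolynomial.monomial α a)) (pderiv i (MvPolynomial.monomial α b))
          = a * b * wfact α * (α i : ℝ) := by
      intro i
      rw [MvPolynomial.pderiv_monomial, MvPolynomial.pderiv_monomial, apolar_def,
        wap_monomial, if_pos rfl]
      rcases Nat.eq_zero_or_pos (α i) with h0 | hpos
      · simp [h0]
      · rw [← mul_wfact_sub_single hpos]
        ring
    rw [Finset.sum_congr rfl (fun i _ => key i), ← Finset.mul_sum, degree_eq_sum_univ]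
    push_cast
    ring
  · rw [if_neg hne]
    refine Finset.sum_eq_zero fun i _ => ?_
    rw [MvPolynomial.pderiv_monomial, MvPolynomial.pderiv_monomial, apolar_def, wap_monomial]
    rcases Nat.eq_zero_or_pos (α i) with h0 | hposa
    · simp [h0]
    rcases Nat.eq_zero_or_pos (β i) with h0 | hposb
    · simp [h0]
    have hsub : α - Finsupp.single i 1 ≠ β - Finsupp.single i 1 := by
      intro heq
      apply hne
      have ha : Finsupp.single i 1 ≤ α := by
        rw [Finsupp.single_le_iff]; exact hposa
      have hb : Finsupp.single i 1 ≤ β := by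
        rw [Finsupp.single_le_iff]; exact hposb
      calc α = α - Finsupp.single i 1 + Finsupp.single i 1 := (tsub_add_cancel_of_le ha).symm
        _ = β - Finsupp.single i 1 + Finsupp.single i 1 := by rw [heq]
        _ = β := tsub_add_cancel_of_le hb
    rw [if_neg hsub]

/-- The derivative recursion identity (bilinear extension). -/
lemma sum_apolar_pderiv (P Q : MvPolynomial (Fin n) ℝ) :
    ∑ i, apolar (pderiv i P) (pderiv i Q)
      = wap (fun γ => wfact γ * (γ.degree : ℝ)) P Q := by
  classical
  conv_lhs => rw [P.as_sum, Q.as_sum]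
  conv_rhs => rw [P.as_sum, Q.as_sum]
  simp only [map_sum]
  rw [wap_sum_left]
  have rhs_eq : ∀ α ∈ P.support,
      wap (fun γ => wfact γ * (γ.degree : ℝ)) (MvPolynomial.monomial α (P.coeff α))
        (∑ β ∈ Q.support, MvPolynomial.monomial β (Q.coeff β))
      = ∑ β ∈ Q.support, wap (fun γ => wfact γ * (γ.degree : ℝ))
          (MvPolynomial.monomial α (P.coeff α)) (MvPolynomial.monomial β (Q.coeff β)) :=
    fun α _ => wap_sum_right _ _ _
  rw [Finset.sum_congr rfl rhs_eq]
  have lhs_eq : ∀ i : Fin n,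
      apolar (∑ α ∈ P.support, pderiv i (MvPolynomial.monomial α (P.coeff α)))
        (∑ β ∈ Q.support, pderiv i (MvPolynomial.monomial β (Q.coeff β)))
      = ∑ α ∈ P.support, ∑ β ∈ Q.support,
          apolar (pderiv i (MvPolynomial.monomial α (P.coeff α)))
            (pderiv i (MvPolynomial.monomial β (Q.coeff β))) := by
    intro i
    rw [apolar_def, wap_sum_left]
    refine Finset.sum_congr rfl fun α _ => ?_
    rw [wap_sum_right]
    rfl
  rw [Finset.sum_congr rfl fun i (_ : i ∈ Finset.univ) => lhs_eq i]
  rw [Finset.sum_comm]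
  refine Finset.sum_congr rfl fun α _ => ?_
  rw [Finset.sum_comm]
  exact Finset.sum_congr rfl fun β _ => sum_apolar_pderiv_monomial α β _ _

/-- pderiv of a homogeneous polynomial is homogeneous. -/
lemma isHomogeneous_pderiv {P : MvPolynomial (Fin n) ℝ} {d : ℕ}
    (hP : P.IsHomogeneous (d + 1)) (i : Fin n) :
    (pderiv i P).IsHomogeneous d := by
  classical
  have hrw : pderiv i P = ∑ α ∈ P.support,
      pderiv i (MvPolynomial.monomial α (P.coeff α)) := by
    conv_lhs => rw [P.as_sum]
    rw [map_sum]
  rw [hrw]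
  refine MvPolynomial.IsHomogeneous.sum _ _ _ fun α hα => ?_
  rw [MvPolynomial.pderiv_monomial]
  rcases Nat.eq_zero_or_pos (α i) with h0 | hpos
  · rw [show ((MvPolynomial.monomial (α - Finsupp.single i 1))
      (P.coeff α * (α i : ℝ)) : MvPolynomial (Fin n) ℝ) = 0 by simp [h0]]
    exact MvPolynomial.isHomogeneous_zero _ _ _
  · apply MvPolynomial.isHomogeneous_monomial
    have hdeg : α.degree = d + 1 :=
      degree_of_coeff_ne_zero hP (MvPolynomial.mem_support_iff.mp hα)
    rw [degree_eq_sum_univ] at hdeg ⊢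
    rw [← Finset.add_sum_erase _ _ (Finset.mem_univ i)] at hdeg ⊢
    rw [Finset.sum_congr rfl fun j hj =>
      sub_single_apply_ne α (Finset.ne_of_mem_erase hj), sub_single_apply_self]
    omega

variable (h : Matrix (Fin n) (Fin n) ℝ)

/-- The linear forms of the substitution. -/
noncomputable def gsub : Fin n → MvPolynomial (Fin n) ℝ :=
  fun i => ∑ j, MvPolynomial.C (h i j) * MvPolynomial.X j

/-- The substitution x_i ↦ ∑_j h i j x_j. -/
noncomputable def subst (P : MvPolynomial (Fin n) ℝ) : MvPolynomial (Fin n) ℝ :=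
  MvPolynomial.aeval (gsub h) P

lemma subst_isHomogeneous {P : MvPolynomial (Fin n) ℝ} {d : ℕ} (hP : P.IsHomogeneous d) :
    (subst h P).IsHomogeneous d := by
  have := hP.aeval (gsub h)
    (fun i => MvPolynomial.IsHomogeneous.sum _ _ _ fun j _ =>
      MvPolynomial.isHomogeneous_C_mul_X _ _)
  rwa [one_mul] at this

lemma pderiv_gsub (i k : Fin n) :
    pderiv k (gsub h i) = MvPolynomial.C (h i k) := by
  classical
  rw [gsub, map_sum, Finset.sum_eq_single k]
  · rw [MvPolynomial.pderiv_C_mul, MvPolynomial.pderiv_X_self, mul_one]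
  · intro j _ hj
    rw [MvPolynomial.pderiv_C_mul, MvPolynomial.pderiv_X_of_ne hj, mul_zero]
  · simp

/-- Chain rule for the substitution. -/
lemma pderiv_subst (P : MvPolynomial (Fin n) ℝ) (k : Fin n) :
    pderiv k (subst h P) = ∑ i, MvPolynomial.C (h i k) * subst h (pderiv i P) := by
  classical
  simp only [subst]
  induction P using MvPolynomial.induction_on with
  | C a => simp [MvPolynomial.algebraMap_eq]
  | add p q hp hq =>
      have expand : ∀ i : Fin n,
          MvPolynomial.C (h i k) * MvPolynomial.aeval (gsub h) (pderiv i (p + q))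
          = MvPolynomial.C (h i k) * MvPolynomial.aeval (gsub h) (pderiv i p)
            + MvPolynomial.C (h i k) * MvPolynomial.aeval (gsub h) (pderiv i q) := by
        intro i
        rw [map_add, map_add, mul_add]
      rw [map_add, map_add, hp, hq, Finset.sum_congr rfl fun i _ => expand i,
        Finset.sum_add_distrib]
  | mul_X p j hp =>
      have hXj : ∀ i : Fin n, (pderiv i (MvPolynomial.X j : MvPolynomial (Fin n) ℝ))
          = if j = i then 1 else 0 := by
        intro i
        rcases eq_or_ne j i with rfl | hne
        · rw [MvPolynomial.pderiv_X_self, if_pos rfl]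
        · rw [MvPolynomial.pderiv_X_of_ne hne, if_neg hne]
      have expand : ∀ i : Fin n,
          MvPolynomial.C (h i k) * MvPolynomial.aeval (gsub h) (pderiv i (p * MvPolynomial.X j))
          = MvPolynomial.C (h i k) * MvPolynomial.aeval (gsub h) (pderiv i p) * gsub h j
            + (if j = i then MvPolynomial.C (h i k) * MvPolynomial.aeval (gsub h) p else 0) := by
        intro i
        rw [MvPolynomial.pderiv_mul, hXj i, map_add, _root_.map_mul, MvPolynomial.aeval_X]
        rcases eq_or_ne j i with rfl | hne
        · rw [if_pos rfl, if_pos rfl, _root_.map_mul, _root_.map_one, mul_one]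
          ring
        · rw [if_neg hne, if_neg hne, mul_zero, _root_.map_zero, add_zero, add_zero, mul_assoc]
      rw [_root_.map_mul, MvPolynomial.aeval_X, MvPolynomial.pderiv_mul, hp, pderiv_gsub h j k,
        Finset.sum_congr rfl fun i _ => expand i, Finset.sum_add_distrib, ← Finset.sum_mul,
        Finset.sum_ite_eq Finset.univ j
          (fun i => MvPolynomial.C (h i k) * MvPolynomial.aeval (gsub h) p)]
      rw [if_pos (Finset.mem_univ j)]
      ring

/-- Main invariance of the apolar pairing. -/
lemma apolar_subst (horth : h * hᵀ = 1) :
    ∀ d : ℕ, ∀ P Q : MvPolynomial (Fin n) ℝ, P.IsHomogeneous d → Q.IsHomogeneous d →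
      apolar (subst h P) (subst h Q) = apolar P Q := by
  classical
  intro d
  induction d with
  | zero =>
      intro P Q hP hQ
      have hPc := eq_C_of_isHomogeneous_zero hP
      have hQc := eq_C_of_isHomogeneous_zero hQ
      rw [hPc, hQc]
      have hC : ∀ c : ℝ, subst h (MvPolynomial.C c) = MvPolynomial.C c := by
        intro c
        rw [subst, MvPolynomial.aeval_C, MvPolynomial.algebraMap_eq]
      rw [hC, hC]
  | succ d ih =>
      intro P Q hP hQ
      have hsP := subst_isHomogeneous h hP
      have hsQ := subst_isHomogeneous h hQ
      have key : ∀ (A B : MvPolynomial (Fin n) ℝ), A.IsHomogeneous (d+1) →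
          B.IsHomogeneous (d+1) →
          ∑ i, apolar (pderiv i A) (pderiv i B) = ((d : ℝ) + 1) * apolar A B := by
        intro A B hA hB
        rw [sum_apolar_pderiv]
        have hw : wap (fun γ => wfact γ * (γ.degree : ℝ)) A B
            = wap (fun γ => wfact γ * ((d : ℝ) + 1)) A B := by
          apply wap_congr_weight
          intro α hα
          rw [degree_of_coeff_ne_zero hA hα]
          push_cast
          ring
        rw [hw, wap_weight_mul_const, apolar_def]
      have E1 : ∑ k, apolar (pderiv k (subst h P)) (pderiv k (subst h Q))
          = ((d : ℝ) + 1) * apolar (subst h P) (subst h Q) := key _ _ hsP hsQ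
      have E2 : ∑ k, apolar (pderiv k P) (pderiv k Q)
          = ((d : ℝ) + 1) * apolar P Q := key _ _ hP hQ
      have E3 : ∑ k, apolar (pderiv k (subst h P)) (pderiv k (subst h Q))
          = ∑ i, apolar (subst h (pderiv i P)) (subst h (pderiv i Q)) := by
        have step : ∀ k, apolar (pderiv k (subst h P)) (pderiv k (subst h Q))
            = ∑ i, ∑ j, h i k * h j k *
                apolar (subst h (pderiv i P)) (subst h (pderiv j Q)) := by
          intro k
          rw [pderiv_subst h P k, pderiv_subst h Q k, apolar_def, wap_sum_left]
          refine Finset.sum_congr rfl fun i _ => ?_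
          rw [wap_sum_right]
          refine Finset.sum_congr rfl fun j _ => ?_
          rw [wap_C_mul_left, wap_C_mul_right, apolar_def]
          ring
        rw [Finset.sum_congr rfl fun k (_ : k ∈ Finset.univ) => step k]
        rw [Finset.sum_comm]
        refine Finset.sum_congr rfl fun i _ => ?_
        rw [Finset.sum_comm]
        have inner : ∀ j, ∑ k, h i k * h j k *
            apolar (subst h (pderiv i P)) (subst h (pderiv j Q))
            = (h * hᵀ) i j * apolar (subst h (pderiv i P)) (subst h (pderiv j Q)) := by
          intro j
          rw [Matrix.mul_apply, Finset.sum_mul]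
          exact Finset.sum_congr rfl fun k _ => by rw [Matrix.transpose_apply]
        rw [Finset.sum_congr rfl fun j (_ : j ∈ Finset.univ) => inner j, horth]
        rw [Finset.sum_eq_single i]
        · rw [Matrix.one_apply_eq, one_mul]
        · intro j _ hj
          rw [Matrix.one_apply_ne (Ne.symm hj), zero_mul]
        · simp
      have E4 : ∀ i : Fin n, apolar (subst h (pderiv i P)) (subst h (pderiv i Q))
          = apolar (pderiv i P) (pderiv i Q) := fun i =>
        ih _ _ (isHomogeneous_pderiv hP i) (isHomogeneous_pderiv hQ i)
      have hne : ((d : ℝ) + 1) ≠ 0 := by positivity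
      apply mul_left_cancel₀ hne
      rw [← E1, E3, Finset.sum_congr rfl fun i (_ : i ∈ Finset.univ) => E4 i, E2]

lemma bombieriInner_self_eq (d : ℕ) (P : MvPolynomial (Fin n) ℝ) :
    bombieriInner n d P P = apolar P P / (Nat.factorial d : ℝ) := by
  rw [bombieriInner, apolar_def, wap, Finset.union_self, Finset.sum_div]
  exact Finset.sum_congr rfl fun α _ => by rw [wfact]; ring

end BombieriAux

open Matrix in
/-- the Bombieri norm is invariant under composition with the orthogonal group. -/
theorem bombieriNorm_comp_orthogonal (n d : ℕ)
    (P : MvPolynomial (Fin n) ℝ) (hP : P.IsHomogeneous d)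
    (h : Matrix (Fin n) (Fin n) ℝ) (horth : hᵀ * h = 1) :
    (MvPolynomial.aeval (fun i => ∑ j, MvPolynomial.C (h i j) * MvPolynomial.X j) P :
        MvPolynomial (Fin n) ℝ).IsHomogeneous d ∧
    bombieriNorm n d
      (MvPolynomial.aeval (fun i => ∑ j, MvPolynomial.C (h i j) * MvPolynomial.X j) P)
    = bombieriNorm n d P := by
  have horth' : h * hᵀ = 1 := mul_eq_one_comm.mp horth
  have hsub : (MvPolynomial.aeval (fun i => ∑ j, MvPolynomial.C (h i j) * MvPolynomial.X j) P :
      MvPolynomial (Fin n) ℝ) = BombieriAux.subst h P := rfl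
  rw [hsub]
  refine ⟨BombieriAux.subst_isHomogeneous h hP, ?_⟩
  rw [bombieriNorm, bombieriNorm, BombieriAux.bombieriInner_self_eq,
    BombieriAux.bombieriInner_self_eq, BombieriAux.apolar_subst h horth' d P P hP hP]
end

section
/- For every homogeneous polynomial P of degree d in n variables and every x ∈ ℝⁿ, ‖∇P(x)‖ ≤ d · ‖P‖ · ‖x‖^{d−1}, where ∇P(x) is the gradient of P at x, ‖∇P(x)‖ and ‖x‖ are Euclidean norms in ℝⁿ, and ‖P‖ is the Bombieri norm of P. -/
open MvPolynomial Finset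

section aux
variable {n : ℕ}

private def faN (α : Fin n →₀ ℕ) : ℕ := ∏ j, Nat.factorial (α j)

private def fa (α : Fin n →₀ ℕ) : ℝ := (faN α : ℝ)

private def mx (x : Fin n → ℝ) (β : Fin n →₀ ℕ) : ℝ := ∏ j, x j ^ β j

private lemma faN_pos (α : Fin n →₀ ℕ) : 0 < faN α :=
  Finset.prod_pos fun j _ => Nat.factorial_pos _

private lemma fa_pos (α : Fin n →₀ ℕ) : 0 < fa α := by
  exact_mod_cast Nat.cast_pos.mpr (faN_pos α)

private lemma mem_A {m : ℕ} {α : Fin n →₀ ℕ} :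
    α ∈ Finset.finsuppAntidiag Finset.univ m ↔ ∑ j, α j = m := by
  simp [Finset.mem_finsuppAntidiag]

private lemma coord_add_single (β : Fin n →₀ ℕ) (i j : Fin n) :
    (β + Finsupp.single i 1 : Fin n →₀ ℕ) j = β j + if i = j then 1 else 0 := by
  simp [Finsupp.single_apply]

private lemma sum_add_single (β : Fin n →₀ ℕ) (i : Fin n) :
    ∑ j, (β + Finsupp.single i 1 : Fin n →₀ ℕ) j = (∑ j, β j) + 1 := by
  simp only [coord_add_single, Finset.sum_add_distrib, Finset.sum_ite_eq, Finset.mem_univ,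
    if_true]

private lemma add_single_sub (β : Fin n →₀ ℕ) (i : Fin n) :
    (β + Finsupp.single i 1) - Finsupp.single i 1 = β := by
  ext j
  simp only [Finsupp.tsub_apply, Finsupp.add_apply]
  omega

private lemma sub_add_single {α : Fin n →₀ ℕ} {i : Fin n} (h : α i ≠ 0) :
    (α - Finsupp.single i 1) + Finsupp.single i 1 = α := by
  ext j
  simp only [Finsupp.tsub_apply, Finsupp.add_apply, Finsupp.single_apply]
  by_cases hij : i = j
  · subst hij; simp; omega
  · simp [hij]

private lemma faN_add_single (β : Fin n →₀ ℕ) (i : Fin n) :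
    faN (β + Finsupp.single i 1) = (β i + 1) * faN β := by
  unfold faN
  have h1 : ∀ j ∈ (Finset.univ : Finset (Fin n)),
      Nat.factorial ((β + Finsupp.single i 1 : Fin n →₀ ℕ) j)
        = (if i = j then β i + 1 else 1) * Nat.factorial (β j) := by
    intro j _
    rw [coord_add_single]
    by_cases hij : i = j
    · subst hij; simp [Nat.factorial_succ]
    · simp [hij]
  rw [Finset.prod_congr rfl h1, Finset.prod_mul_distrib, Finset.prod_ite_eq, if_pos
    (Finset.mem_univ i)]

private lemma fa_add_single (β : Fin n →₀ ℕ) (i : Fin n) :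
    fa (β + Finsupp.single i 1) = ((β i : ℕ) + 1 : ℝ) * fa β := by
  unfold fa
  rw [faN_add_single]; push_cast; ring

private lemma mx_single (x : Fin n → ℝ) (i : Fin n) :
    mx x (Finsupp.single i 1) = x i := by
  unfold mx
  rw [Finset.prod_eq_single i (fun j _ hj => by
    rw [Finsupp.single_apply, if_neg (fun h => hj h.symm), pow_zero]) (by simp)]
  simp

private lemma mx_add (x : Fin n → ℝ) (β γ : Fin n →₀ ℕ) :
    mx x (β + γ) = mx x β * mx x γ := by
  unfold mx
  rw [← Finset.prod_mul_distrib]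
  exact Finset.prod_congr rfl fun j _ => by rw [Finsupp.add_apply, pow_add]

private lemma mx_add_single (x : Fin n → ℝ) (β : Fin n →₀ ℕ) (i : Fin n) :
    mx x (β + Finsupp.single i 1) = x i * mx x β := by
  rw [mx_add, mx_single]; ring


private lemma sum_shift (m : ℕ) (i : Fin n) (F : (Fin n →₀ ℕ) → ℝ)
    (hF : ∀ α, α i = 0 → F α = 0) :
    ∑ α ∈ Finset.finsuppAntidiag Finset.univ (m + 1), F α
      = ∑ β ∈ Finset.finsuppAntidiag Finset.univ m, F (β + Finsupp.single i 1) := by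
  classical
  have himg : ∑ α ∈ (Finset.finsuppAntidiag (Finset.univ : Finset (Fin n)) m).image
      (fun β => β + Finsupp.single i 1), F α
      = ∑ β ∈ Finset.finsuppAntidiag Finset.univ m, F (β + Finsupp.single i 1) :=
    Finset.sum_image (fun a _ b _ h => by simpa using h)
  rw [← himg]
  refine (Finset.sum_subset ?_ ?_).symm
  · intro α hα
    rw [Finset.mem_image] at hα
    obtain ⟨β, hβ, rfl⟩ := hα
    rw [mem_A] at hβ ⊢
    rw [sum_add_single, hβ]
  · intro α hα hnm
    by_contra hne
    have hαi : α i ≠ 0 := fun h => hne (hF α h)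
    apply hnm
    rw [Finset.mem_image]
    refine ⟨α - Finsupp.single i 1, ?_, sub_add_single hαi⟩
    rw [mem_A] at hα ⊢
    have h2 : ∑ j, ((α - Finsupp.single i 1) + Finsupp.single i 1 : Fin n →₀ ℕ) j = m + 1 := by
      rw [sub_add_single hαi]; exact hα
    rw [sum_add_single] at h2
    omega

private lemma multinomial_sum (g : Fin n → ℝ) :
    ∀ m : ℕ, ∑ β ∈ Finset.finsuppAntidiag Finset.univ m,
        ((Nat.factorial m : ℝ) / fa β) * ∏ j, g j ^ β j
      = (∑ j, g j) ^ m := by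
  intro m
  induction m with
  | zero =>
    rw [Finset.finsuppAntidiag_zero, Finset.sum_singleton]
    simp [fa, faN]
  | succ m ih =>
    have hsplit : ∀ β ∈ Finset.finsuppAntidiag (Finset.univ : Finset (Fin n)) (m + 1),
        ((Nat.factorial (m+1) : ℝ) / fa β) * ∏ j, g j ^ β j
          = ∑ i, ((β i : ℕ) : ℝ) * (((Nat.factorial m : ℝ) / fa β) * ∏ j, g j ^ β j) := by
      intro β hβ
      rw [mem_A] at hβ
      rw [← Finset.sum_mul]
      have : (∑ i, ((β i : ℕ) : ℝ)) = ((m : ℝ) + 1) := by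
        rw [← Nat.cast_sum]; rw [hβ]; push_cast; ring
      rw [this, Nat.factorial_succ]
      push_cast
      field_simp
    rw [Finset.sum_congr rfl hsplit, Finset.sum_comm]
    have hinner : ∀ i : Fin n,
        ∑ β ∈ Finset.finsuppAntidiag Finset.univ (m + 1),
          ((β i : ℕ) : ℝ) * (((Nat.factorial m : ℝ) / fa β) * ∏ j, g j ^ β j)
        = g i * (∑ j, g j) ^ m := by
      intro i
      rw [sum_shift m i _ (fun α h => by rw [h]; push_cast; ring)]
      have : ∀ γ ∈ Finset.finsuppAntidiag (Finset.univ : Finset (Fin n)) m,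
          (((γ + Finsupp.single i 1 : Fin n →₀ ℕ) i : ℕ) : ℝ) *
            (((Nat.factorial m : ℝ) / fa (γ + Finsupp.single i 1)) *
              ∏ j, g j ^ ((γ + Finsupp.single i 1 : Fin n →₀ ℕ) j))
          = g i * (((Nat.factorial m : ℝ) / fa γ) * ∏ j, g j ^ γ j) := by
        intro γ _
        have hmx : (∏ j, g j ^ ((γ + Finsupp.single i 1 : Fin n →₀ ℕ) j)) = g i * ∏ j, g j ^ γ j :=
          mx_add_single g γ i
        rw [hmx, fa_add_single, coord_add_single, if_pos rfl]
        have h1 : fa γ ≠ 0 := ne_of_gt (fa_pos γ)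
        have h2 : ((γ i : ℕ) : ℝ) * fa γ + fa γ ≠ 0 := by
          have := fa_pos γ
          have : (0:ℝ) ≤ ((γ i : ℕ) : ℝ) := Nat.cast_nonneg _
          nlinarith [fa_pos γ]
        push_cast
        field_simp
      rw [Finset.sum_congr rfl this, ← Finset.mul_sum, ih]
    rw [Finset.sum_congr rfl (fun i _ => hinner i), ← Finset.sum_mul, pow_succ]
    ring

private lemma moment_sum (g : Fin n → ℝ) (i : Fin n) (m : ℕ) :
    ∑ β ∈ Finset.finsuppAntidiag Finset.univ (m + 1),
        ((Nat.factorial (m+1) : ℝ) / fa β) * ((β i : ℕ) : ℝ) * ∏ j, g j ^ β j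
      = (m + 1 : ℝ) * g i * (∑ j, g j) ^ m := by
  rw [sum_shift m i _ (fun α h => by rw [h]; push_cast; ring)]
  have : ∀ γ ∈ Finset.finsuppAntidiag (Finset.univ : Finset (Fin n)) m,
      ((Nat.factorial (m+1) : ℝ) / fa (γ + Finsupp.single i 1)) *
          (((γ + Finsupp.single i 1 : Fin n →₀ ℕ) i : ℕ) : ℝ) *
          ∏ j, g j ^ ((γ + Finsupp.single i 1 : Fin n →₀ ℕ) j)
      = ((m : ℝ) + 1) * g i * (((Nat.factorial m : ℝ) / fa γ) * ∏ j, g j ^ γ j) := by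
    intro γ _
    have hmx : (∏ j, g j ^ ((γ + Finsupp.single i 1 : Fin n →₀ ℕ) j)) = g i * ∏ j, g j ^ γ j :=
      mx_add_single g γ i
    rw [hmx, fa_add_single, coord_add_single, if_pos rfl, Nat.factorial_succ]
    have h1 : fa γ ≠ 0 := ne_of_gt (fa_pos γ)
    have h2 : ((γ i : ℕ) : ℝ) * fa γ + fa γ ≠ 0 := by
      have : (0:ℝ) ≤ ((γ i : ℕ) : ℝ) := Nat.cast_nonneg _
      nlinarith [fa_pos γ]
    push_cast
    field_simp
  rw [Finset.sum_congr rfl this, ← Finset.mul_sum, multinomial_sum]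


private lemma mx_sq (x : Fin n → ℝ) (β : Fin n →₀ ℕ) :
    mx x β * mx x β = ∏ k, (x k ^ 2) ^ β k := by
  unfold mx
  rw [← Finset.prod_mul_distrib]
  exact Finset.prod_congr rfl fun k _ => by rw [← pow_add, ← two_mul, pow_mul]

private lemma Tij (x : Fin n → ℝ) (m : ℕ) (i j : Fin n) :
    ∑ α ∈ Finset.finsuppAntidiag Finset.univ (m + 2),
        ((Nat.factorial (m+2) : ℝ) / fa α) *
          (((α i : ℕ) : ℝ) * ((α j : ℕ) : ℝ) *
            (mx x (α - Finsupp.single i 1) * mx x (α - Finsupp.single j 1)))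
      = ((m : ℝ) + 2) * ((m : ℝ) + 1) * x i * x j * (∑ k, x k ^ 2) ^ m
        + (if i = j then ((m : ℝ) + 2) * (∑ k, x k ^ 2) ^ (m + 1) else 0) := by
  classical
  rw [show m + 2 = (m + 1) + 1 from rfl,
    sum_shift (m+1) i _ (fun α h => by rw [h]; push_cast; ring)]
  by_cases hij : i = j
  · subst hij
    have hcongr : ∀ β ∈ Finset.finsuppAntidiag (Finset.univ : Finset (Fin n)) (m + 1),
        ((Nat.factorial (m+1+1) : ℝ) / fa (β + Finsupp.single i 1)) *
          ((((β + Finsupp.single i 1 : Fin n →₀ ℕ) i : ℕ) : ℝ) *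
            (((β + Finsupp.single i 1 : Fin n →₀ ℕ) i : ℕ) : ℝ) *
            (mx x ((β + Finsupp.single i 1) - Finsupp.single i 1) *
              mx x ((β + Finsupp.single i 1) - Finsupp.single i 1)))
        = ((m : ℝ) + 2) *
            (((Nat.factorial (m+1) : ℝ) / fa β) * ((β i : ℕ) : ℝ) * ∏ k, (x k ^ 2) ^ β k)
          + ((m : ℝ) + 2) *
            (((Nat.factorial (m+1) : ℝ) / fa β) * ∏ k, (x k ^ 2) ^ β k) := by
      intro β _
      rw [add_single_sub, fa_add_single, coord_add_single, if_pos rfl, mx_sq]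
      have h1 : fa β ≠ 0 := ne_of_gt (fa_pos β)
      have h2 : ((β i : ℕ) : ℝ) * fa β + fa β ≠ 0 := by
        have : (0:ℝ) ≤ ((β i : ℕ) : ℝ) := Nat.cast_nonneg _
        nlinarith [fa_pos β]
      have hfac : ((Nat.factorial (m+1+1) : ℝ)) = ((m:ℝ)+2) * (Nat.factorial (m+1) : ℝ) := by
        rw [Nat.factorial_succ]; push_cast; ring
      rw [hfac]
      push_cast
      field_simp
    rw [Finset.sum_congr rfl hcongr, Finset.sum_add_distrib, ← Finset.mul_sum, ← Finset.mul_sum]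
    have hm : ∑ β ∈ Finset.finsuppAntidiag (Finset.univ : Finset (Fin n)) (m + 1),
        ((Nat.factorial (m+1) : ℝ) / fa β) * ((β i : ℕ) : ℝ) * ∏ k, (x k ^ 2) ^ β k
        = ((m : ℝ) + 1) * (x i ^ 2) * (∑ k, x k ^ 2) ^ m := moment_sum (fun k => x k ^ 2) i m
    have hmu : ∑ β ∈ Finset.finsuppAntidiag (Finset.univ : Finset (Fin n)) (m + 1),
        ((Nat.factorial (m+1) : ℝ) / fa β) * ∏ k, (x k ^ 2) ^ β k
        = (∑ k, x k ^ 2) ^ (m+1) := multinomial_sum (fun k => x k ^ 2) (m+1)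
    rw [hm, hmu, if_pos rfl]
    ring
  · have hcongr : ∀ β ∈ Finset.finsuppAntidiag (Finset.univ : Finset (Fin n)) (m + 1),
        ((Nat.factorial (m+1+1) : ℝ) / fa (β + Finsupp.single i 1)) *
          ((((β + Finsupp.single i 1 : Fin n →₀ ℕ) i : ℕ) : ℝ) *
            (((β + Finsupp.single i 1 : Fin n →₀ ℕ) j : ℕ) : ℝ) *
            (mx x ((β + Finsupp.single i 1) - Finsupp.single i 1) *
              mx x ((β + Finsupp.single i 1) - Finsupp.single j 1)))
        = ((Nat.factorial (m+1+1) : ℝ) / fa β) * ((β j : ℕ) : ℝ) *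
            (mx x β * mx x ((β + Finsupp.single i 1) - Finsupp.single j 1)) := by
      intro β _
      rw [add_single_sub, fa_add_single, coord_add_single (j := i), if_pos rfl,
        coord_add_single (j := j), if_neg hij]
      have h2 : ((β i : ℕ) : ℝ) * fa β + fa β ≠ 0 := by
        have : (0:ℝ) ≤ ((β i : ℕ) : ℝ) := Nat.cast_nonneg _
        nlinarith [fa_pos β]
      have h1 : fa β ≠ 0 := ne_of_gt (fa_pos β)
      push_cast
      field_simp
      ring
    rw [Finset.sum_congr rfl hcongr,
      sum_shift m j _ (fun β h => by rw [h]; push_cast; ring)]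
    have hcongr2 : ∀ γ ∈ Finset.finsuppAntidiag (Finset.univ : Finset (Fin n)) m,
        ((Nat.factorial (m+1+1) : ℝ) / fa (γ + Finsupp.single j 1)) *
            (((γ + Finsupp.single j 1 : Fin n →₀ ℕ) j : ℕ) : ℝ) *
            (mx x (γ + Finsupp.single j 1) *
              mx x ((γ + Finsupp.single j 1 + Finsupp.single i 1) - Finsupp.single j 1))
        = ((m : ℝ) + 2) * ((m : ℝ) + 1) * x i * x j *
            (((Nat.factorial m : ℝ) / fa γ) * ∏ k, (x k ^ 2) ^ γ k) := by
      intro γ _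
      have hsub : (γ + Finsupp.single j 1 + Finsupp.single i 1) - Finsupp.single j 1
          = γ + Finsupp.single i 1 := by
        rw [show γ + Finsupp.single j 1 + Finsupp.single i 1
            = (γ + Finsupp.single i 1) + Finsupp.single j 1 by abel, add_single_sub]
      rw [hsub, fa_add_single, coord_add_single, if_pos rfl, mx_add_single, mx_add_single,
        ← mx_sq x γ]
      have h1 : fa γ ≠ 0 := ne_of_gt (fa_pos γ)
      have h2 : ((γ j : ℕ) : ℝ) * fa γ + fa γ ≠ 0 := by
        have : (0:ℝ) ≤ ((γ j : ℕ) : ℝ) := Nat.cast_nonneg _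
        nlinarith [fa_pos γ]
      have hfac : ((Nat.factorial (m+1+1) : ℝ))
          = ((m:ℝ)+2) * ((m:ℝ)+1) * (Nat.factorial m : ℝ) := by
        rw [Nat.factorial_succ, Nat.factorial_succ]; push_cast; ring
      rw [hfac]
      push_cast
      field_simp
    rw [Finset.sum_congr rfl hcongr2, ← Finset.mul_sum, multinomial_sum, if_neg hij, add_zero]


private lemma key_sum (x u : Fin n → ℝ) (m : ℕ) :
    ∑ α ∈ Finset.finsuppAntidiag Finset.univ (m + 2),
        ((Nat.factorial (m+2) : ℝ) / fa α) *
          (∑ i, u i * (((α i : ℕ) : ℝ) * mx x (α - Finsupp.single i 1))) ^ 2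
      = ((m : ℝ) + 2) * ((m : ℝ) + 1) * (∑ i, u i * x i) ^ 2 * (∑ k, x k ^ 2) ^ m
        + ((m : ℝ) + 2) * (∑ i, u i ^ 2) * (∑ k, x k ^ 2) ^ (m + 1) := by
  classical
  have step1 : ∀ α ∈ Finset.finsuppAntidiag (Finset.univ : Finset (Fin n)) (m + 2),
      ((Nat.factorial (m+2) : ℝ) / fa α) *
          (∑ i, u i * (((α i : ℕ) : ℝ) * mx x (α - Finsupp.single i 1))) ^ 2
        = ∑ i, ∑ j, (u i * u j) *
            (((Nat.factorial (m+2) : ℝ) / fa α) *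
              (((α i : ℕ) : ℝ) * ((α j : ℕ) : ℝ) *
                (mx x (α - Finsupp.single i 1) * mx x (α - Finsupp.single j 1)))) := by
    intro α _
    rw [sq, Finset.sum_mul_sum, Finset.mul_sum]
    refine Finset.sum_congr rfl fun i _ => ?_
    rw [Finset.mul_sum]
    refine Finset.sum_congr rfl fun j _ => ?_
    ring
  rw [Finset.sum_congr rfl step1, Finset.sum_comm]
  have step2 : ∀ i : Fin n,
      (∑ α ∈ Finset.finsuppAntidiag (Finset.univ : Finset (Fin n)) (m + 2), ∑ j,
        (u i * u j) *
            (((Nat.factorial (m+2) : ℝ) / fa α) *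
              (((α i : ℕ) : ℝ) * ((α j : ℕ) : ℝ) *
                (mx x (α - Finsupp.single i 1) * mx x (α - Finsupp.single j 1)))))
      = ∑ j, (u i * u j) *
          (((m : ℝ) + 2) * ((m : ℝ) + 1) * x i * x j * (∑ k, x k ^ 2) ^ m
            + (if i = j then ((m : ℝ) + 2) * (∑ k, x k ^ 2) ^ (m + 1) else 0)) := by
    intro i
    rw [Finset.sum_comm]
    refine Finset.sum_congr rfl fun j _ => ?_
    rw [← Finset.mul_sum, Tij]
  rw [Finset.sum_congr rfl fun i _ => step2 i]
  have expand : ∀ i : Fin n, ∑ j, (u i * u j) *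
          (((m : ℝ) + 2) * ((m : ℝ) + 1) * x i * x j * (∑ k, x k ^ 2) ^ m
            + (if i = j then ((m : ℝ) + 2) * (∑ k, x k ^ 2) ^ (m + 1) else 0))
      = ((u i * x i) * (∑ j, u j * x j)) * (((m : ℝ) + 2) * ((m : ℝ) + 1) * (∑ k, x k ^ 2) ^ m)
        + u i ^ 2 * (((m : ℝ) + 2) * (∑ k, x k ^ 2) ^ (m + 1)) := by
    intro i
    have hterm : ∀ j : Fin n, (u i * u j) *
          (((m : ℝ) + 2) * ((m : ℝ) + 1) * x i * x j * (∑ k, x k ^ 2) ^ m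
            + (if i = j then ((m : ℝ) + 2) * (∑ k, x k ^ 2) ^ (m + 1) else 0))
        = ((u i * x i) * (((m : ℝ) + 2) * ((m : ℝ) + 1) * (∑ k, x k ^ 2) ^ m)) * (u j * x j)
          + (if i = j then (u i * u j) * (((m : ℝ) + 2) * (∑ k, x k ^ 2) ^ (m + 1)) else 0) :=
      fun j => by by_cases h : i = j <;> simp [h] <;> ring
    rw [Finset.sum_congr rfl fun j _ => hterm j]
    rw [Finset.sum_add_distrib, ← Finset.mul_sum, Finset.sum_ite_eq, if_pos (Finset.mem_univ i)]
    ring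
  rw [Finset.sum_congr rfl fun i _ => expand i, Finset.sum_add_distrib, ← Finset.sum_mul,
    ← Finset.sum_mul, ← Finset.sum_mul]
  rw [sq (∑ i, u i * x i)]
  ring

private lemma key_le (x u : Fin n → ℝ) (m : ℕ) (hu : ∑ i, u i ^ 2 ≤ 1) :
    ∑ α ∈ Finset.finsuppAntidiag Finset.univ (m + 2),
        ((Nat.factorial (m+2) : ℝ) / fa α) *
          (∑ i, u i * (((α i : ℕ) : ℝ) * mx x (α - Finsupp.single i 1))) ^ 2
      ≤ ((m : ℝ) + 2) ^ 2 * (∑ k, x k ^ 2) ^ (m + 1) := by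
  rw [key_sum]
  have hS : (0:ℝ) ≤ ∑ k, x k ^ 2 := Finset.sum_nonneg fun k _ => sq_nonneg _
  have hSm : (0:ℝ) ≤ (∑ k, x k ^ 2) ^ m := pow_nonneg hS m
  have hcs : (∑ i, u i * x i) ^ 2 ≤ (∑ i, u i ^ 2) * (∑ i, x i ^ 2) :=
    Finset.sum_mul_sq_le_sq_mul_sq Finset.univ u x
  have hcs2 : (∑ i, u i * x i) ^ 2 ≤ (∑ i, x i ^ 2) := by
    calc (∑ i, u i * x i) ^ 2 ≤ (∑ i, u i ^ 2) * (∑ i, x i ^ 2) := hcs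
      _ ≤ 1 * (∑ i, x i ^ 2) := by
          exact mul_le_mul_of_nonneg_right hu hS
      _ = (∑ i, x i ^ 2) := one_mul _
  have hpow : ((∑ k, x k ^ 2) : ℝ) ^ (m + 1) = (∑ k, x k ^ 2) ^ m * (∑ k, x k ^ 2) :=
    pow_succ _ _
  have c1 : (0:ℝ) ≤ ((m:ℝ)+2)*((m:ℝ)+1) := by positivity
  have c2 : (0:ℝ) ≤ ((m:ℝ)+2) := by positivity
  have hX : (∑ i, u i * x i) ^ 2 * (∑ k, x k ^ 2) ^ m ≤ (∑ k, x k ^ 2) ^ (m+1) := by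
    calc (∑ i, u i * x i) ^ 2 * (∑ k, x k ^ 2) ^ m
        ≤ (∑ k, x k ^ 2) * (∑ k, x k ^ 2) ^ m := mul_le_mul_of_nonneg_right hcs2 hSm
      _ = (∑ k, x k ^ 2) ^ (m+1) := by rw [hpow]; ring
  have hY : (∑ i, u i ^ 2) * (∑ k, x k ^ 2) ^ (m+1) ≤ (∑ k, x k ^ 2) ^ (m+1) := by
    have := mul_le_mul_of_nonneg_right hu (pow_nonneg hS (m+1))
    simpa using this
  nlinarith [mul_le_mul_of_nonneg_left hX c1, mul_le_mul_of_nonneg_left hY c2]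

private lemma sqrt_pow' (a : ℝ) (ha : 0 ≤ a) (k : ℕ) :
    Real.sqrt (a ^ k) = (Real.sqrt a) ^ k := by
  induction k with
  | zero => simp
  | succ k ih => rw [pow_succ, pow_succ, Real.sqrt_mul (pow_nonneg ha k), ih]

private lemma degree_univ (α : Fin n →₀ ℕ) : ∑ j, α j = Finsupp.degree α :=
  (Finset.sum_subset (Finset.subset_univ _)
    (fun j _ hj => Finsupp.notMem_support_iff.mp hj)).symm

private lemma grad_repr (P : MvPolynomial ((Fin n)) ℝ) (x u : Fin n → ℝ) :
    ∑ i, u i * eval x (pderiv i P)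
      = ∑ α ∈ P.support, P.coeff α *
          (∑ i, u i * (((α i : ℕ) : ℝ) * mx x (α - Finsupp.single i 1))) := by
  have hev : ∀ i, eval x (pderiv i P)
      = ∑ α ∈ P.support, P.coeff α * (((α i : ℕ) : ℝ) * mx x (α - Finsupp.single i 1)) := by
    intro i
    conv_lhs => rw [P.as_sum]
    rw [map_sum, map_sum]
    refine Finset.sum_congr rfl fun α _ => ?_
    rw [pderiv_monomial, eval_monomial]
    rw [Finsupp.prod_fintype _ _ (fun j => pow_zero _)]
    unfold mx
    ring
  rw [Finset.sum_congr rfl fun i _ => by rw [hev i, Finset.mul_sum]]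
  rw [Finset.sum_comm]
  refine Finset.sum_congr rfl fun α _ => ?_
  rw [Finset.mul_sum]
  refine Finset.sum_congr rfl fun i _ => ?_
  ring

end aux

private lemma bombieriInner_self_nonneg (n d : ℕ) (P : MvPolynomial (Fin n) ℝ) :
    0 ≤ bombieriInner n d P P :=
  Finset.sum_nonneg fun α _ => by
    have h1 : (0:ℝ) ≤ ((∏ i, Nat.factorial (α i) : ℕ) : ℝ) / (Nat.factorial d : ℝ) := by
      positivity
    have h2 : P.coeff α * P.coeff α = (P.coeff α) ^ 2 := (sq _).symm
    rw [h2]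
    positivity

private lemma main_bound {n : ℕ} (m : ℕ) (P : MvPolynomial (Fin n) ℝ)
    (hP : P.IsHomogeneous (m + 2)) (x u : Fin n → ℝ) (hu : ∑ i, u i ^ 2 ≤ 1) :
    ∑ α ∈ P.support, P.coeff α *
        (∑ i, u i * (((α i : ℕ) : ℝ) * mx x (α - Finsupp.single i 1)))
      ≤ ((m : ℝ) + 2) * bombieriNorm n (m + 2) P * (Real.sqrt (∑ k, x k ^ 2)) ^ (m + 1) := by
  classical
  have hS : (0:ℝ) ≤ ∑ k, x k ^ 2 := Finset.sum_nonneg fun k _ => sq_nonneg _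
  set G := fun α : Fin n →₀ ℕ =>
    ∑ i, u i * (((α i : ℕ) : ℝ) * mx x (α - Finsupp.single i 1)) with hGdef
  have hbnn : 0 ≤ bombieriInner n (m + 2) P P := bombieriInner_self_nonneg n (m+2) P
  have hRHS : 0 ≤ ((m : ℝ) + 2) * bombieriNorm n (m + 2) P *
      (Real.sqrt (∑ k, x k ^ 2)) ^ (m + 1) := by
    have h1 : 0 ≤ bombieriNorm n (m + 2) P := Real.sqrt_nonneg _
    have h2 : 0 ≤ Real.sqrt (∑ k, x k ^ 2) := Real.sqrt_nonneg _
    positivity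
  rcases le_or_gt (∑ α ∈ P.support, P.coeff α * G α) 0 with hneg | hpos
  · exact le_trans hneg hRHS
  have hfacpos : (0:ℝ) < (Nat.factorial (m + 2) : ℝ) :=
    Nat.cast_pos.mpr (Nat.factorial_pos _)
  have cs : (∑ α ∈ P.support, P.coeff α * G α) ^ 2
      ≤ (∑ α ∈ P.support, (P.coeff α) ^ 2 * (fa α / (Nat.factorial (m + 2) : ℝ)))
        * (∑ α ∈ P.support, (G α) ^ 2 * ((Nat.factorial (m + 2) : ℝ) / fa α)) := by
    have h := Finset.sum_mul_sq_le_sq_mul_sq P.support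
      (fun α => P.coeff α * Real.sqrt (fa α / (Nat.factorial (m + 2) : ℝ)))
      (fun α => G α * Real.sqrt ((Nat.factorial (m + 2) : ℝ) / fa α))
    have hfg : ∀ α ∈ P.support,
        (P.coeff α * Real.sqrt (fa α / (Nat.factorial (m + 2) : ℝ))) *
          (G α * Real.sqrt ((Nat.factorial (m + 2) : ℝ) / fa α)) = P.coeff α * G α := by
      intro α _
      have h1 : (0:ℝ) < fa α / (Nat.factorial (m + 2) : ℝ) := by
        have := fa_pos α
        positivity
      have h2 : Real.sqrt (fa α / (Nat.factorial (m + 2) : ℝ)) *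
          Real.sqrt ((Nat.factorial (m + 2) : ℝ) / fa α) = 1 := by
        rw [← Real.sqrt_mul (le_of_lt h1)]
        rw [show (fa α / (Nat.factorial (m + 2) : ℝ)) * ((Nat.factorial (m + 2) : ℝ) / fa α)
            = 1 by
          have h3 : fa α ≠ 0 := (fa_pos α).ne'
          field_simp]
        exact Real.sqrt_one
      rw [mul_mul_mul_comm, h2, mul_one]
    have hf2 : ∀ α ∈ P.support,
        (P.coeff α * Real.sqrt (fa α / (Nat.factorial (m + 2) : ℝ))) ^ 2
          = (P.coeff α) ^ 2 * (fa α / (Nat.factorial (m + 2) : ℝ)) := by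
      intro α _
      have h1 : (0:ℝ) ≤ fa α / (Nat.factorial (m + 2) : ℝ) := by
        have := fa_pos α
        positivity
      rw [mul_pow, Real.sq_sqrt h1]
    have hg2 : ∀ α ∈ P.support,
        (G α * Real.sqrt ((Nat.factorial (m + 2) : ℝ) / fa α)) ^ 2
          = (G α) ^ 2 * ((Nat.factorial (m + 2) : ℝ) / fa α) := by
      intro α _
      have h1 : (0:ℝ) ≤ (Nat.factorial (m + 2) : ℝ) / fa α := by
        have := fa_pos α
        positivity
      rw [mul_pow, Real.sq_sqrt h1]
    rw [Finset.sum_congr rfl hfg, Finset.sum_congr rfl hf2, Finset.sum_congr rfl hg2] at h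
    exact h
  have hsupp : P.support ⊆ Finset.finsuppAntidiag Finset.univ (m + 2) := by
    intro α hα
    rw [mem_A, degree_univ, Finsupp.degree_eq_weight_one]
    exact hP (MvPolynomial.mem_support_iff.mp hα)
  have hGle : (∑ α ∈ P.support, (G α) ^ 2 * ((Nat.factorial (m + 2) : ℝ) / fa α))
      ≤ ((m : ℝ) + 2) ^ 2 * (∑ k, x k ^ 2) ^ (m + 1) := by
    calc (∑ α ∈ P.support, (G α) ^ 2 * ((Nat.factorial (m + 2) : ℝ) / fa α))
        ≤ ∑ α ∈ Finset.finsuppAntidiag Finset.univ (m + 2),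
            (G α) ^ 2 * ((Nat.factorial (m + 2) : ℝ) / fa α) := by
          refine Finset.sum_le_sum_of_subset_of_nonneg hsupp fun α _ _ => ?_
          have := fa_pos α
          positivity
      _ = ∑ α ∈ Finset.finsuppAntidiag Finset.univ (m + 2),
            ((Nat.factorial (m + 2) : ℝ) / fa α) * (G α) ^ 2 :=
          Finset.sum_congr rfl fun α _ => by ring
      _ ≤ ((m : ℝ) + 2) ^ 2 * (∑ k, x k ^ 2) ^ (m + 1) := key_le x u m hu
  have hbi : (∑ α ∈ P.support, (P.coeff α) ^ 2 * (fa α / (Nat.factorial (m + 2) : ℝ)))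
      = bombieriInner n (m + 2) P P := by
    unfold bombieriInner fa faN
    exact Finset.sum_congr rfl fun α _ => by ring
  have hfinal : (∑ α ∈ P.support, P.coeff α * G α) ^ 2
      ≤ bombieriInner n (m + 2) P P * (((m : ℝ) + 2) ^ 2 * (∑ k, x k ^ 2) ^ (m + 1)) := by
    calc (∑ α ∈ P.support, P.coeff α * G α) ^ 2
        ≤ bombieriInner n (m + 2) P P
            * (∑ α ∈ P.support, (G α) ^ 2 * ((Nat.factorial (m + 2) : ℝ) / fa α)) := by
          rw [← hbi]; exact cs
      _ ≤ _ := mul_le_mul_of_nonneg_left hGle hbnn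
  calc (∑ α ∈ P.support, P.coeff α * G α)
      = Real.sqrt ((∑ α ∈ P.support, P.coeff α * G α) ^ 2) :=
        (Real.sqrt_sq (le_of_lt hpos)).symm
    _ ≤ Real.sqrt (bombieriInner n (m + 2) P P
          * (((m : ℝ) + 2) ^ 2 * (∑ k, x k ^ 2) ^ (m + 1))) := Real.sqrt_le_sqrt hfinal
    _ = ((m : ℝ) + 2) * bombieriNorm n (m + 2) P * (Real.sqrt (∑ k, x k ^ 2)) ^ (m + 1) := by
        rw [Real.sqrt_mul hbnn, Real.sqrt_mul (sq_nonneg ((m:ℝ)+2)),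
          Real.sqrt_sq (by positivity : (0:ℝ) ≤ (m:ℝ)+2), sqrt_pow' _ hS]
        unfold bombieriNorm
        ring


/-- `‖∇P(x)‖ ≤ d · ‖P‖ · ‖x‖^(d-1)` for `P` homogeneous of degree `d`. -/
theorem norm_gradient_le_bombieriNorm (n d : ℕ) (hn : 1 < n) (hd : 1 < d)
    (P : MvPolynomial (Fin n) ℝ) (hP : P.IsHomogeneous d) (x : Fin n → ℝ) :
    Real.sqrt (∑ i, (eval x (pderiv i P)) ^ 2) ≤
      d * bombieriNorm n d P * (Real.sqrt (∑ i, x i ^ 2)) ^ (d - 1) := by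
  obtain ⟨m, rfl⟩ : ∃ m, d = m + 2 := ⟨d - 2, by omega⟩
  have hsum : (0:ℝ) ≤ ∑ i, (eval x (pderiv i P)) ^ 2 :=
    Finset.sum_nonneg fun i _ => sq_nonneg _
  have hRHS : 0 ≤ ((m + 2 : ℕ) : ℝ) * bombieriNorm n (m + 2) P *
      (Real.sqrt (∑ i, x i ^ 2)) ^ (m + 2 - 1) := by
    have h1 : 0 ≤ bombieriNorm n (m + 2) P := Real.sqrt_nonneg _
    have h2 : 0 ≤ Real.sqrt (∑ i, x i ^ 2) := Real.sqrt_nonneg _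
    positivity
  rcases eq_or_lt_of_le hsum with h0 | h0
  · rw [← h0, Real.sqrt_zero]
    exact hRHS
  · set N := Real.sqrt (∑ i, (eval x (pderiv i P)) ^ 2) with hNdef
    have hNpos : 0 < N := Real.sqrt_pos.mpr h0
    have hN2 : N ^ 2 = ∑ i, (eval x (pderiv i P)) ^ 2 := Real.sq_sqrt hsum
    set u := fun i => eval x (pderiv i P) / N with hudef
    have huu : ∑ i, u i ^ 2 ≤ 1 := by
      have h1 : ∑ i, u i ^ 2 = (∑ i, (eval x (pderiv i P)) ^ 2) / N ^ 2 := by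
        rw [Finset.sum_div]
        exact Finset.sum_congr rfl fun i _ => by rw [hudef]; ring
      rw [h1, ← hN2, div_self (by positivity)]
    have hlin : ∑ i, u i * eval x (pderiv i P) = N := by
      have h1 : ∑ i, u i * eval x (pderiv i P) = (∑ i, (eval x (pderiv i P)) ^ 2) / N := by
        rw [Finset.sum_div]
        exact Finset.sum_congr rfl fun i _ => by rw [hudef]; ring
      rw [h1, ← hN2, sq, mul_div_assoc, div_self hNpos.ne', mul_one]
    have hmain := main_bound m P hP x u huu
    calc N = ∑ α ∈ P.support, P.coeff α *
          (∑ i, u i * (((α i : ℕ) : ℝ) * mx x (α - Finsupp.single i 1))) :=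
        hlin.symm.trans (grad_repr P x u)
      _ ≤ ((m : ℝ) + 2) * bombieriNorm n (m + 2) P *
          (Real.sqrt (∑ k, x k ^ 2)) ^ (m + 1) := hmain
      _ = ((m + 2 : ℕ) : ℝ) * bombieriNorm n (m + 2) P *
          (Real.sqrt (∑ i, x i ^ 2)) ^ (m + 2 - 1) := by push_cast; ring
end

section
/- Let P be a homogeneous polynomial of degree d > 1 in n > 1 variables. Then the distance from P to the real discriminant Δ in the Bombieri norm equals min over x in the unit sphere S^{n−1} of √(P(x)² + ‖∇ᵀP(x)‖²/d). Equivalently, dist²(P,Δ) = min over x ∈ S^{n−1} of ((1−d)·P(x)² + ‖∇P(x)‖²/d). -/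
open MvPolynomial Finset

namespace DistDiscAux

noncomputable def wgt (n d : ℕ) (α : Fin n →₀ ℕ) : ℝ :=
  ((∏ i, Nat.factorial (α i) : ℕ) : ℝ) / (Nat.factorial d : ℝ)

lemma wgt_nonneg (n d : ℕ) (α : Fin n →₀ ℕ) : 0 ≤ wgt n d α := by
  unfold wgt; positivity

variable {n d : ℕ}

lemma inner_expand (P Q : MvPolynomial (Fin n) ℝ) (s : Finset (Fin n →₀ ℕ))
    (hs : P.support ⊆ s) :
    bombieriInner n d P Q = ∑ α ∈ s, P.coeff α * Q.coeff α * wgt n d α := by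
  unfold bombieriInner wgt
  exact Finset.sum_subset hs (fun α _ hα => by
    rw [MvPolynomial.notMem_support_iff.mp hα]; ring)

lemma inner_symm (P Q : MvPolynomial (Fin n) ℝ) :
    bombieriInner n d P Q = bombieriInner n d Q P := by
  rw [inner_expand P Q (P.support ∪ Q.support) subset_union_left,
      inner_expand Q P (P.support ∪ Q.support) subset_union_right]
  exact Finset.sum_congr rfl fun α _ => by ring

lemma inner_add_right (P Q R : MvPolynomial (Fin n) ℝ) :
    bombieriInner n d P (Q + R) = bombieriInner n d P Q + bombieriInner n d P R := by
  rw [inner_expand P (Q + R) P.support subset_rfl, inner_expand P Q P.support subset_rfl,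
    inner_expand P R P.support subset_rfl, ← Finset.sum_add_distrib]
  exact Finset.sum_congr rfl fun α _ => by rw [coeff_add]; ring

lemma inner_zero_right (P : MvPolynomial (Fin n) ℝ) : bombieriInner n d P 0 = 0 := by
  unfold bombieriInner; simp

lemma inner_C_mul_right (P Q : MvPolynomial (Fin n) ℝ) (c : ℝ) :
    bombieriInner n d P (C c * Q) = c * bombieriInner n d P Q := by
  rw [inner_expand P (C c * Q) P.support subset_rfl, inner_expand P Q P.support subset_rfl,
    Finset.mul_sum]
  exact Finset.sum_congr rfl fun α _ => by rw [coeff_C_mul]; ring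

lemma inner_sum_right {ι : Type*} (P : MvPolynomial (Fin n) ℝ) (s : Finset ι)
    (f : ι → MvPolynomial (Fin n) ℝ) :
    bombieriInner n d P (∑ i ∈ s, f i) = ∑ i ∈ s, bombieriInner n d P (f i) := by
  classical
  induction s using Finset.induction_on with
  | empty => simpa using inner_zero_right P
  | insert _ _ h ih =>
      rw [Finset.sum_insert h, inner_add_right, ih, Finset.sum_insert h]

lemma inner_self_nonneg (P : MvPolynomial (Fin n) ℝ) : 0 ≤ bombieriInner n d P P := by
  unfold bombieriInner
  exact Finset.sum_nonneg fun α _ => mul_nonneg (mul_self_nonneg _) (wgt_nonneg n d α)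

end DistDiscAux



namespace DistDiscAux
variable {n d : ℕ}

lemma degree_of_mem_support {P : MvPolynomial (Fin n) ℝ} (hP : P.IsHomogeneous d)
    {α : Fin n →₀ ℕ} (hα : α ∈ P.support) : ∑ i, α i = d := by
  have h1 : α.degree = d := by
    by_contra h
    exact MvPolynomial.mem_support_iff.mp hα (hP.coeff_eq_zero h)
  rw [← h1, Finsupp.degree]
  exact (Finset.sum_subset (Finset.subset_univ _)
    (fun i _ hi => Finsupp.notMem_support_iff.mp hi)).symm

noncomputable def linP (n : ℕ) (x : Fin n → ℝ) : MvPolynomial (Fin n) ℝ :=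
  ∑ i, C (x i) * X i

lemma coeff_ker (x : Fin n → ℝ) (m : ℕ) (α : Fin n →₀ ℕ) (hα : ∑ i, α i = m) :
    coeff α ((linP n x) ^ m) = (Nat.multinomial Finset.univ ⇑α : ℝ) * ∏ i, x i ^ α i := by
  classical
  rw [linP, Finset.sum_pow_eq_sum_piAntidiag, coeff_sum]
  have hterm : ∀ k : Fin n → ℕ,
      (Nat.multinomial Finset.univ k : MvPolynomial (Fin n) ℝ) * ∏ i, (C (x i) * X i) ^ k i
      = C ((Nat.multinomial Finset.univ k : ℝ) * ∏ i, x i ^ k i) *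
          monomial (Finsupp.equivFunOnFinite.symm k) 1 := by
    intro k
    have h1 : (monomial (Finsupp.equivFunOnFinite.symm k) (1:ℝ)) = ∏ i, X i ^ k i := by
      rw [monic_monomial_eq, Finsupp.prod_pow]
      rfl
    rw [h1]
    simp only [mul_pow, Finset.prod_mul_distrib, ← map_pow, ← map_prod]
    rw [map_mul, ← map_natCast (C : ℝ →+* MvPolynomial (Fin n) ℝ)]
    ring
  rw [Finset.sum_congr rfl fun k _ => by rw [hterm k]]
  rw [Finset.sum_congr rfl fun k _ =>
    coeff_C_mul (p := monomial (Finsupp.equivFunOnFinite.symm k) (1:ℝ)) α _]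
  rw [Finset.sum_eq_single (⇑α)]
  · rw [coeff_monomial, if_pos (by rw [Finsupp.equivFunOnFinite_symm_coe]), mul_one]
  · intro k hk hkα
    rw [coeff_monomial, if_neg, mul_zero]
    intro h
    apply hkα
    rw [← h]
    rfl
  · exact fun h => absurd (Finset.mem_piAntidiag.mpr ⟨hα, fun i _ => Finset.mem_univ i⟩) h

lemma inner_ker {m : ℕ} {P : MvPolynomial (Fin n) ℝ} (hP : P.IsHomogeneous m)
    (x : Fin n → ℝ) :
    bombieriInner n m P ((linP n x) ^ m) = eval x P := by
  rw [inner_expand P _ P.support subset_rfl, eval_eq']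
  refine Finset.sum_congr rfl fun α hα => ?_
  have hdeg : ∑ i, α i = m := degree_of_mem_support hP hα
  rw [coeff_ker x m α hdeg]
  unfold wgt
  have hmul : ((∏ i, Nat.factorial (α i) : ℕ) : ℝ) * (Nat.multinomial Finset.univ ⇑α : ℝ)
      = (Nat.factorial m : ℝ) := by
    rw_mod_cast [Nat.multinomial_spec]
    rw [hdeg]
  have hf : (Nat.factorial m : ℝ) ≠ 0 := Nat.cast_ne_zero.mpr (Nat.factorial_ne_zero m)
  field_simp
  push_cast at hmul ⊢
  rw [← hmul]
  ring

end DistDiscAux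


namespace DistDiscAux
variable {n d : ℕ}

noncomputable def dec (α : Fin n →₀ ℕ) (i : Fin n) : Fin n →₀ ℕ := α - Finsupp.single i 1

lemma dec_def (α : Fin n →₀ ℕ) (i : Fin n) : dec α i = α - Finsupp.single i 1 := rfl

lemma dec_apply_ne (α : Fin n →₀ ℕ) {i j : Fin n} (hj : j ≠ i) : dec α i j = α j := by
  rw [dec, Finsupp.tsub_apply, Finsupp.single_apply, if_neg (fun hh => hj hh.symm), Nat.sub_zero]

lemma dec_apply_self (α : Fin n →₀ ℕ) (i : Fin n) : dec α i i = α i - 1 := by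
  rw [dec, Finsupp.tsub_apply, Finsupp.single_apply, if_pos rfl]

lemma eval_pderiv_eq_sum (x : Fin n → ℝ) (i : Fin n) (P : MvPolynomial (Fin n) ℝ) :
    eval x (pderiv i P) = ∑ α ∈ P.support,
      P.coeff α * (α i) * ∏ j, x j ^ (dec α i j) := by
  conv_lhs => rw [← P.support_sum_monomial_coeff, map_sum, map_sum]
  refine Finset.sum_congr rfl fun α _ => ?_
  rw [pderiv_monomial, eval_monomial, Finsupp.prod_pow, ← dec_def]

lemma prod_dec (x : Fin n → ℝ) (α : Fin n →₀ ℕ) (i : Fin n) (h : α i ≠ 0) :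
    x i * ∏ j, x j ^ (dec α i j) = ∏ j, x j ^ α j := by
  rw [← Finset.mul_prod_erase Finset.univ _ (Finset.mem_univ i),
      ← Finset.mul_prod_erase Finset.univ (fun j => x j ^ α j) (Finset.mem_univ i)]
  have he : ∏ j ∈ Finset.univ.erase i, x j ^ (dec α i) j
      = ∏ j ∈ Finset.univ.erase i, x j ^ α j :=
    Finset.prod_congr rfl fun j hj => by rw [dec_apply_ne α (Finset.mem_erase.mp hj).1]
  rw [dec_apply_self, he, ← mul_assoc, ← pow_succ',
    Nat.sub_add_cancel (Nat.one_le_iff_ne_zero.mpr h)]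

lemma sum_dec (α : Fin n →₀ ℕ) (i : Fin n) (h : α i ≠ 0) (hd : ∑ j, α j = d) :
    ∑ j, dec α i j = d - 1 := by
  rw [← Finset.add_sum_erase Finset.univ _ (Finset.mem_univ i)] at hd ⊢
  rw [dec_apply_self, Finset.sum_congr rfl fun j hj => dec_apply_ne α (Finset.mem_erase.mp hj).1]
  omega

lemma euler {P : MvPolynomial (Fin n) ℝ} (hP : P.IsHomogeneous d) (x : Fin n → ℝ) :
    ∑ i, x i * eval x (pderiv i P) = d * eval x P := by
  rw [eval_eq', Finset.mul_sum]
  simp only [eval_pderiv_eq_sum, Finset.mul_sum]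
  rw [Finset.sum_comm]
  refine Finset.sum_congr rfl fun α hα => ?_
  have hdeg : ∑ i, α i = d := degree_of_mem_support hP hα
  have hterm : ∀ i, x i * (P.coeff α * (α i) * ∏ j, x j ^ (dec α i j))
      = P.coeff α * (α i) * ∏ j, x j ^ α j := by
    intro i
    by_cases h : α i = 0
    · simp [h]
    · rw [← prod_dec x α i h]
      ring
  rw [Finset.sum_congr rfl fun i _ => hterm i, ← Finset.sum_mul]
  rw [show ∑ i, P.coeff α * (α i : ℝ) = P.coeff α * (d : ℝ) by
    rw [← Finset.mul_sum]; norm_cast; rw [hdeg]]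
  ring

lemma prod_factorial_dec (α : Fin n →₀ ℕ) (i : Fin n) (h : α i ≠ 0) :
    (∏ j, Nat.factorial (α j)) = α i * ∏ j, Nat.factorial (dec α i j) := by
  rw [← Finset.mul_prod_erase Finset.univ _ (Finset.mem_univ i),
      ← Finset.mul_prod_erase Finset.univ (fun j => Nat.factorial (dec α i j))
        (Finset.mem_univ i)]
  have he : ∏ j ∈ Finset.univ.erase i, Nat.factorial ((dec α i) j)
      = ∏ j ∈ Finset.univ.erase i, Nat.factorial (α j) :=
    Finset.prod_congr rfl fun j hj => by rw [dec_apply_ne α (Finset.mem_erase.mp hj).1]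
  rw [dec_apply_self, he, ← mul_assoc, Nat.mul_factorial_pred h]

lemma inner_grad (hd1 : 1 ≤ d) {P : MvPolynomial (Fin n) ℝ} (hP : P.IsHomogeneous d)
    (x : Fin n → ℝ) (i : Fin n) :
    bombieriInner n d P ((linP n x) ^ (d - 1) * X i) = eval x (pderiv i P) / d := by
  classical
  rw [inner_expand P _ P.support subset_rfl, eval_pderiv_eq_sum, Finset.sum_div]
  refine Finset.sum_congr rfl fun α hα => ?_
  have hdeg : ∑ j, α j = d := degree_of_mem_support hP hα
  rw [coeff_mul_X']
  by_cases hi : i ∈ α.support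
  · have hαi : α i ≠ 0 := Finsupp.mem_support_iff.mp hi
    rw [if_pos hi, ← dec_def, coeff_ker x (d-1) _ (sum_dec α i hαi hdeg)]
    unfold wgt
    have hmul : ((∏ j, Nat.factorial (dec α i j) : ℕ) : ℝ) *
        (Nat.multinomial Finset.univ ⇑(dec α i) : ℝ)
        = (Nat.factorial (d-1) : ℝ) := by
      rw_mod_cast [Nat.multinomial_spec]
      rw [sum_dec α i hαi hdeg]
    have hfac := prod_factorial_dec α i hαi
    have hd' : (Nat.factorial d : ℝ) = d * Nat.factorial (d - 1) := by
      rw_mod_cast [← Nat.mul_factorial_pred (by omega)]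
    have hfne : (Nat.factorial d : ℝ) ≠ 0 := Nat.cast_ne_zero.mpr (Nat.factorial_ne_zero d)
    have hdne : (d : ℝ) ≠ 0 := Nat.cast_ne_zero.mpr (by omega)
    field_simp
    have hfacR := congrArg (fun k : ℕ => (k : ℝ)) hfac
    push_cast at hfacR hmul ⊢
    rw [hfacR, hd', ← hmul]
    ring
  · rw [if_neg hi]
    have h0 : α i = 0 := Finsupp.notMem_support_iff.mp hi
    simp [h0]

end DistDiscAux


namespace DistDiscAux
variable {n d : ℕ}

lemma lin_homog (x : Fin n → ℝ) : (linP n x).IsHomogeneous 1 := by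
  apply MvPolynomial.IsHomogeneous.sum
  intro i _
  exact (isHomogeneous_X ℝ i).C_mul (x i)

lemma ker_homog (x : Fin n → ℝ) (m : ℕ) : ((linP n x) ^ m).IsHomogeneous m := by
  simpa using (lin_homog x).pow m

lemma grad_homog (x : Fin n → ℝ) (hd1 : 1 ≤ d) (i : Fin n) :
    ((linP n x) ^ (d - 1) * X i).IsHomogeneous d := by
  have := (ker_homog x (d - 1)).mul (isHomogeneous_X ℝ i)
  rwa [Nat.sub_add_cancel hd1] at this

lemma eval_lin (x y : Fin n → ℝ) : eval y (linP n x) = ∑ i, x i * y i := by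
  simp [linP]

lemma eval_lin_self {x : Fin n → ℝ} (hx : ∑ i, x i ^ 2 = 1) : eval x (linP n x) = 1 := by
  rw [eval_lin, ← hx]
  exact Finset.sum_congr rfl fun i _ => (sq (x i)).symm

lemma pderiv_lin (x : Fin n → ℝ) (j : Fin n) : pderiv j (linP n x) = C (x j) := by
  rw [linP, map_sum, Finset.sum_eq_single j]
  · rw [pderiv_C_mul, pderiv_X_self, mul_one]
  · intro i _ hij
    rw [pderiv_C_mul, pderiv_X_of_ne hij, mul_zero]
  · exact fun h => absurd (Finset.mem_univ j) h

lemma eval_ker_self {x : Fin n → ℝ} (hx : ∑ i, x i ^ 2 = 1) (m : ℕ) :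
    eval x ((linP n x) ^ m) = 1 := by
  rw [map_pow, eval_lin_self hx, one_pow]

lemma eval_pderiv_ker {x : Fin n → ℝ} (hx : ∑ i, x i ^ 2 = 1) (m : ℕ) (j : Fin n) :
    eval x (pderiv j ((linP n x) ^ m)) = m * x j := by
  rw [pderiv_pow, pderiv_lin]
  simp [eval_lin_self hx]

lemma eval_grad_self {x : Fin n → ℝ} (hx : ∑ i, x i ^ 2 = 1) (i : Fin n) :
    eval x ((linP n x) ^ (d - 1) * X i) = x i := by
  rw [map_mul, eval_ker_self hx, eval_X, one_mul]

lemma eval_pderiv_grad {x : Fin n → ℝ} (hx : ∑ i, x i ^ 2 = 1) (i j : Fin n) :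
    eval x (pderiv j ((linP n x) ^ (d - 1) * X i))
      = ((d - 1 : ℕ) : ℝ) * x j * x i + (if j = i then 1 else 0) := by
  rw [pderiv_mul, map_add, map_mul, map_mul, eval_pderiv_ker hx, eval_ker_self hx, eval_X,
    pderiv_X, one_mul]
  by_cases h : j = i
  · subst h; simp
  · simp [h, Pi.single_apply]

/-- tangent gradient component -/
noncomputable def tv (n d : ℕ) (P : MvPolynomial (Fin n) ℝ) (x : Fin n → ℝ) (i : Fin n) : ℝ :=
  eval x (pderiv i P) - d * eval x P * x i

/-- the minimal-norm perturbation -/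
noncomputable def Rpoly (n d : ℕ) (P : MvPolynomial (Fin n) ℝ) (x : Fin n → ℝ) :
    MvPolynomial (Fin n) ℝ :=
  C (eval x P) * (linP n x) ^ d +
    ∑ i, C (tv n d P x i) * ((linP n x) ^ (d - 1) * X i)

lemma sum_tv_mul_self {P : MvPolynomial (Fin n) ℝ} (hP : P.IsHomogeneous d)
    {x : Fin n → ℝ} (hx : ∑ i, x i ^ 2 = 1) :
    ∑ i, tv n d P x i * x i = 0 := by
  unfold tv
  have h1 : ∑ i, (eval x (pderiv i P) - d * eval x P * x i) * x i
      = (∑ i, x i * eval x (pderiv i P)) - d * eval x P * ∑ i, x i ^ 2 := by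
    rw [Finset.mul_sum, ← Finset.sum_sub_distrib]
    exact Finset.sum_congr rfl fun i _ => by ring
  rw [h1, euler hP, hx]
  ring

lemma Rpoly_homog (P : MvPolynomial (Fin n) ℝ) (x : Fin n → ℝ) (hd1 : 1 ≤ d) :
    (Rpoly n d P x).IsHomogeneous d := by
  refine ((ker_homog x d).C_mul _).add (MvPolynomial.IsHomogeneous.sum _ _ _ fun i _ => ?_)
  exact (grad_homog x hd1 i).C_mul _

lemma eval_Rpoly {P : MvPolynomial (Fin n) ℝ} (hP : P.IsHomogeneous d)
    {x : Fin n → ℝ} (hx : ∑ i, x i ^ 2 = 1) :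
    eval x (Rpoly n d P x) = eval x P := by
  rw [Rpoly, map_add, map_mul, map_sum, eval_C, eval_ker_self hx, mul_one]
  have h1 : ∀ i, eval x (C (tv n d P x i) * ((linP n x) ^ (d - 1) * X i))
      = tv n d P x i * x i := by
    intro i
    rw [map_mul, eval_C, eval_grad_self hx]
  rw [Finset.sum_congr rfl fun i _ => h1 i, sum_tv_mul_self hP hx, add_zero]

lemma eval_pderiv_Rpoly (hd1 : 1 ≤ d) {P : MvPolynomial (Fin n) ℝ} (hP : P.IsHomogeneous d)
    {x : Fin n → ℝ} (hx : ∑ i, x i ^ 2 = 1) (j : Fin n) :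
    eval x (pderiv j (Rpoly n d P x)) = eval x (pderiv j P) := by
  rw [Rpoly, map_add, map_sum, map_add, map_sum]
  rw [pderiv_C_mul, map_mul, eval_C, eval_pderiv_ker hx]
  have h1 : ∀ i, eval x (pderiv j (C (tv n d P x i) * ((linP n x) ^ (d - 1) * X i)))
      = tv n d P x i * (((d - 1 : ℕ) : ℝ) * x j * x i) + tv n d P x i * (if j = i then 1 else 0) := by
    intro i
    rw [pderiv_C_mul, map_mul, eval_C, eval_pderiv_grad hx]
    ring
  rw [Finset.sum_congr rfl fun i _ => h1 i, Finset.sum_add_distrib]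
  have h2 : ∑ i, tv n d P x i * (((d - 1 : ℕ) : ℝ) * x j * x i) = 0 := by
    have : ∑ i, tv n d P x i * (((d - 1 : ℕ) : ℝ) * x j * x i)
        = ((d - 1 : ℕ) : ℝ) * x j * ∑ i, tv n d P x i * x i := by
      rw [Finset.mul_sum]
      exact Finset.sum_congr rfl fun i _ => by ring
    rw [this, sum_tv_mul_self hP hx, mul_zero]
  have h3 : ∑ i, tv n d P x i * (if j = i then 1 else 0) = tv n d P x j := by
    simp [mul_ite]
  rw [h2, h3, zero_add]
  unfold tv
  ring
end DistDiscAux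


namespace DistDiscAux
variable {n d : ℕ}

lemma inner_add_left (P Q R : MvPolynomial (Fin n) ℝ) :
    bombieriInner n d (P + Q) R = bombieriInner n d P R + bombieriInner n d Q R := by
  rw [inner_symm, inner_add_right, inner_symm R P, inner_symm R Q]

lemma inner_Rpoly_right (hd1 : 1 ≤ d) {Q : MvPolynomial (Fin n) ℝ} (hQ : Q.IsHomogeneous d)
    (P : MvPolynomial (Fin n) ℝ) (x : Fin n → ℝ) :
    bombieriInner n d Q (Rpoly n d P x)
      = eval x P * eval x Q + ∑ i, tv n d P x i * (eval x (pderiv i Q) / d) := by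
  rw [Rpoly, inner_add_right, inner_C_mul_right, inner_sum_right, inner_ker hQ]
  congr 1
  exact Finset.sum_congr rfl fun i _ => by
    rw [inner_C_mul_right, inner_grad hd1 hQ x i]

lemma inner_Rpoly_self (hd1 : 1 ≤ d) {P : MvPolynomial (Fin n) ℝ} (hP : P.IsHomogeneous d)
    {x : Fin n → ℝ} (hx : ∑ i, x i ^ 2 = 1) :
    bombieriInner n d (Rpoly n d P x) (Rpoly n d P x)
      = (eval x P) ^ 2 + (∑ i, tv n d P x i ^ 2) / d := by
  rw [inner_Rpoly_right hd1 (Rpoly_homog P x hd1) P x, eval_Rpoly hP hx]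
  have h1 : ∀ i, tv n d P x i * (eval x (pderiv i (Rpoly n d P x)) / d)
      = (tv n d P x i ^ 2 + d * eval x P * (tv n d P x i * x i)) / d := by
    intro i
    rw [eval_pderiv_Rpoly hd1 hP hx i]
    have : eval x (pderiv i P) = tv n d P x i + d * eval x P * x i := by
      unfold tv; ring
    rw [this]
    ring
  rw [Finset.sum_congr rfl fun i _ => h1 i]
  rw [← Finset.sum_div, Finset.sum_add_distrib, ← Finset.mul_sum, sum_tv_mul_self hP hx,
    mul_zero, add_zero]
  ring

lemma inner_sub_ge (hd1 : 1 ≤ d) {P Q : MvPolynomial (Fin n) ℝ} (hP : P.IsHomogeneous d)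
    (hQ : Q.IsHomogeneous d) {y : Fin n → ℝ} (hy : ∑ i, y i ^ 2 = 1)
    (hQy : eval y Q = 0) (hQd : ∀ i, eval y (pderiv i Q) = 0) :
    (eval y P) ^ 2 + (∑ i, tv n d P y i ^ 2) / d ≤ bombieriInner n d (P - Q) (P - Q) := by
  set R := Rpoly n d P y with hRdef
  set S := P - Q - R with hSdef
  have hSR : P - Q = S + R := by rw [hSdef]; ring
  have hShom : S.IsHomogeneous d := (hP.sub hQ).sub (Rpoly_homog P y hd1)
  have hSy : eval y S = 0 := by
    rw [hSdef, map_sub, map_sub, hQy, hRdef, eval_Rpoly hP hy]; ring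
  have hSd : ∀ i, eval y (pderiv i S) = 0 := by
    intro i
    rw [hSdef, map_sub, map_sub, map_sub, map_sub, hQd i, hRdef,
      eval_pderiv_Rpoly hd1 hP hy i]
    ring
  have hSR0 : bombieriInner n d S R = 0 := by
    rw [hRdef, inner_Rpoly_right hd1 hShom P y, hSy]
    simp [hSd]
  have hRS0 : bombieriInner n d R S = 0 := by rw [inner_symm]; exact hSR0
  have hRR : bombieriInner n d R R = (eval y P) ^ 2 + (∑ i, tv n d P y i ^ 2) / d := by
    rw [hRdef]; exact inner_Rpoly_self hd1 hP hy
  rw [hSR, inner_add_right, inner_add_left, inner_add_left, hSR0, hRS0, hRR]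
  have := inner_self_nonneg (d := d) S
  linarith

lemma fval_nonneg (P : MvPolynomial (Fin n) ℝ) (x : Fin n → ℝ) :
    0 ≤ (eval x P) ^ 2 + (∑ i, tv n d P x i ^ 2) / d := by
  have h1 : (0:ℝ) ≤ ∑ i, tv n d P x i ^ 2 := Finset.sum_nonneg fun i _ => sq_nonneg _
  have h2 : (0:ℝ) ≤ (d:ℝ) := Nat.cast_nonneg d
  positivity

lemma fval_eq (hd0 : (d:ℝ) ≠ 0) {P : MvPolynomial (Fin n) ℝ} (hP : P.IsHomogeneous d)
    {x : Fin n → ℝ} (hx : ∑ i, x i ^ 2 = 1) :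
    (eval x P) ^ 2 + (∑ i, tv n d P x i ^ 2) / d
      = (1 - (d:ℝ)) * (eval x P) ^ 2 + (∑ i, (eval x (pderiv i P)) ^ 2) / d := by
  have he := euler hP x
  have h1 : ∑ i, tv n d P x i ^ 2
      = (∑ i, (eval x (pderiv i P)) ^ 2)
        - 2 * ((d:ℝ) * eval x P) * (∑ i, x i * eval x (pderiv i P))
        + ((d:ℝ) * eval x P) ^ 2 * (∑ i, x i ^ 2) := by
    rw [Finset.mul_sum, Finset.mul_sum, ← Finset.sum_sub_distrib, ← Finset.sum_add_distrib]
    refine Finset.sum_congr rfl fun i _ => ?_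
    unfold tv
    ring
  rw [h1, he, hx]
  field_simp
  ring

end DistDiscAux

namespace DistDiscAux

lemma exists_min {n : ℕ} (hn : 0 < n) (f : (Fin n → ℝ) → ℝ) (hf : Continuous f) :
    ∃ x₀ : Fin n → ℝ, (∑ i, x₀ i ^ 2) = 1 ∧
      ∀ x : Fin n → ℝ, (∑ i, x i ^ 2) = 1 → f x₀ ≤ f x := by
  have hcont : Continuous fun x : Fin n → ℝ => ∑ i, x i ^ 2 :=
    continuous_finset_sum _ fun i _ => (continuous_apply i).pow 2
  have hclosed : IsClosed {x : Fin n → ℝ | ∑ i, x i ^ 2 = 1} :=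
    isClosed_eq hcont continuous_const
  have hsub : {x : Fin n → ℝ | ∑ i, x i ^ 2 = 1} ⊆ Metric.closedBall 0 1 := by
    intro x hx
    rw [Metric.mem_closedBall, dist_zero_right]
    rw [pi_norm_le_iff_of_nonneg zero_le_one]
    intro i
    rw [Real.norm_eq_abs, ← sq_le_one_iff_abs_le_one]
    have h1 : x i ^ 2 ≤ ∑ j, x j ^ 2 := Finset.single_le_sum (f := fun j => x j ^ 2)
      (fun j _ => sq_nonneg _) (Finset.mem_univ i)
    have h2 : ∑ j, x j ^ 2 = 1 := hx
    linarith
  have hcomp : IsCompact {x : Fin n → ℝ | ∑ i, x i ^ 2 = 1} :=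
    (isCompact_closedBall _ _).of_isClosed_subset hclosed hsub
  have hne : ({x : Fin n → ℝ | ∑ i, x i ^ 2 = 1}).Nonempty := by
    refine ⟨fun i => if i = ⟨0, hn⟩ then 1 else 0, ?_⟩
    show ∑ i, (if i = (⟨0, hn⟩ : Fin n) then (1:ℝ) else 0) ^ 2 = 1
    have h1 : ∀ i : Fin n, (if i = (⟨0, hn⟩ : Fin n) then (1:ℝ) else 0) ^ 2
        = if i = (⟨0, hn⟩ : Fin n) then (1:ℝ) else 0 := by
      intro i; split <;> norm_num
    rw [Finset.sum_congr rfl fun i _ => h1 i, Finset.sum_ite_eq' Finset.univ _ (fun _ => (1:ℝ))]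
    simp
  obtain ⟨x₀, hx₀, hmin⟩ := hcomp.exists_isMinOn hne hf.continuousOn
  exact ⟨x₀, hx₀, fun x hx => isMinOn_iff.mp hmin x hx⟩

end DistDiscAux

open DistDiscAux

/-- the distance from `P` to the real discriminant in the Bombieri norm is the
minimum over the unit sphere of `√(P(x)² + ‖∇ᵀP(x)‖²/d)`; equivalently `dist²(P,Δ)` is the
minimum over the sphere of `(1-d)·P(x)² + ‖∇P(x)‖²/d`. -/
theorem distDisc_eq_min_sphere (n d : ℕ) (hn : 1 < n) (hd : 1 < d)
    (P : MvPolynomial (Fin n) ℝ) (hP : P.IsHomogeneous d) :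
    IsLeast {r : ℝ | ∃ x : Fin n → ℝ, (∑ i, x i ^ 2) = 1 ∧
        r = Real.sqrt ((eval x P) ^ 2 +
          (∑ i, (eval x (pderiv i P) - d * eval x P * x i) ^ 2) / d)}
      (distDisc n d P)
    ∧ IsLeast {r : ℝ | ∃ x : Fin n → ℝ, (∑ i, x i ^ 2) = 1 ∧
        r = ((1 : ℝ) - d) * (eval x P) ^ 2 + (∑ i, (eval x (pderiv i P)) ^ 2) / d}
      ((distDisc n d P) ^ 2) := by
  have hd1 : 1 ≤ d := le_of_lt hd
  have hd0 : (d : ℝ) ≠ 0 := Nat.cast_ne_zero.mpr (by omega)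
  set f : (Fin n → ℝ) → ℝ := fun x => (eval x P) ^ 2 +
    (∑ i, (eval x (pderiv i P) - d * eval x P * x i) ^ 2) / d with hfdef
  have hfval : ∀ x, f x = (eval x P) ^ 2 + (∑ i, tv n d P x i ^ 2) / d := fun x => rfl
  have hcont : Continuous f := by
    apply Continuous.add ((MvPolynomial.continuous_eval P).pow 2)
    apply Continuous.div_const
    apply continuous_finset_sum
    intro i _
    exact (((MvPolynomial.continuous_eval _).sub
      ((continuous_const.mul (MvPolynomial.continuous_eval P)).mul (continuous_apply i)))).pow 2
  obtain ⟨x₀, hx₀, hmin⟩ := exists_min (by omega) f hcont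
  set m := f x₀ with hmdef
  have hm0 : 0 ≤ m := by rw [hmdef, hfval x₀]; exact fval_nonneg P x₀
  have hmem : Real.sqrt m ∈ {r | ∃ Q ∈ realDisc n d, r = bombieriNorm n d (P - Q)} := by
    refine ⟨P - Rpoly n d P x₀, ⟨hP.sub (Rpoly_homog P x₀ hd1), x₀, hx₀, ?_, ?_⟩, ?_⟩
    · rw [map_sub, eval_Rpoly hP hx₀]; ring
    · intro i; rw [map_sub, map_sub, eval_pderiv_Rpoly hd1 hP hx₀ i]; ring
    · rw [show P - (P - Rpoly n d P x₀) = Rpoly n d P x₀ from by ring]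
      rw [bombieriNorm, inner_Rpoly_self hd1 hP hx₀, ← hfval x₀]
  have hlb : ∀ r ∈ {r | ∃ Q ∈ realDisc n d, r = bombieriNorm n d (P - Q)},
      Real.sqrt m ≤ r := by
    rintro r ⟨Q, ⟨hQhom, y, hy, hQy, hQd⟩, rfl⟩
    rw [bombieriNorm]
    apply Real.sqrt_le_sqrt
    calc m ≤ f y := hmin y hy
      _ ≤ _ := by rw [hfval y]; exact inner_sub_ge hd1 hP hQhom hy hQy hQd
  have hdist : distDisc n d P = Real.sqrt m := by
    unfold distDisc
    exact le_antisymm (csInf_le ⟨Real.sqrt m, fun r hr => hlb r hr⟩ hmem)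
      (le_csInf ⟨_, hmem⟩ hlb)
  have hsq : distDisc n d P ^ 2 = m := by rw [hdist, Real.sq_sqrt hm0]
  constructor
  · constructor
    · exact ⟨x₀, hx₀, by rw [hdist]⟩
    · rintro r ⟨x, hx, rfl⟩
      rw [hdist]
      exact Real.sqrt_le_sqrt (hmin x hx)
  · constructor
    · refine ⟨x₀, hx₀, ?_⟩
      rw [hsq, hmdef, hfval x₀, fval_eq hd0 hP hx₀]
    · rintro r ⟨x, hx, rfl⟩
      rw [hsq, ← fval_eq hd0 hP hx, ← hfval x]
      exact hmin x hx
end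

section
/- Let P be a homogeneous polynomial of degree d > 1 in n > 1 variables. Then the distance from P to the real discriminant Δ in the Bombieri norm satisfies dist(P,Δ) ≤ |P(x)| for every x ∈ S^{n−1} with ∇ᵀP(x) = 0; that is, dist(P,Δ) is at most the minimum of the absolute values of the critical values of P on the unit sphere. -/
open MvPolynomial Finset

lemma bombieriInner_self_eq_sum_superset (n d : ℕ) (P : MvPolynomial (Fin n) ℝ)
    (T : Finset ((Fin n) →₀ ℕ)) (hT : P.support ⊆ T) :
    bombieriInner n d P P = ∑ α ∈ T, P.coeff α * P.coeff α *
      (((∏ i, Nat.factorial (α i) : ℕ) : ℝ) / (Nat.factorial d : ℝ)) := by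
  unfold bombieriInner
  exact Finset.sum_subset hT (fun α _ hα => by
    simp [MvPolynomial.notMem_support_iff.mp hα])

lemma Lpow_eq (n d : ℕ) (c : ℝ) (x : Fin n → ℝ) :
    C c * (∑ i, C (x i) * X i) ^ d
      = ∑ k ∈ piAntidiag (univ : Finset (Fin n)) d,
          monomial (Finsupp.equivFunOnFinite.symm k)
            (c * ((Nat.multinomial univ k : ℝ) * ∏ i, x i ^ k i)) := by
  rw [Finset.sum_pow_eq_sum_piAntidiag, Finset.mul_sum]
  refine Finset.sum_congr rfl fun k hk => ?_
  have h1 : ∏ i, (C (x i) * X i) ^ k i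
      = C (∏ i, x i ^ k i) * ∏ i, (X i : MvPolynomial (Fin n) ℝ) ^ k i := by
    rw [map_prod, ← Finset.prod_mul_distrib]
    exact Finset.prod_congr rfl fun i _ => by rw [mul_pow, map_pow]
  have h2 : (monomial (Finsupp.equivFunOnFinite.symm k)
        (c * ((Nat.multinomial univ k : ℝ) * ∏ i, x i ^ k i)) : MvPolynomial (Fin n) ℝ)
      = C c * C (Nat.multinomial univ k : ℝ) * C (∏ i, x i ^ k i)
          * ∏ i, (X i : MvPolynomial (Fin n) ℝ) ^ k i := by
    rw [monomial_eq, Finsupp.prod_fintype _ _ (fun i => pow_zero _)]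
    simp only [map_mul, Finsupp.coe_equivFunOnFinite_symm]
    ring
  rw [h1, h2, MvPolynomial.C_eq_coe_nat]
  push_cast
  ring

lemma coeff_cLpow (n d : ℕ) (c : ℝ) (x : Fin n → ℝ) (k : Fin n → ℕ)
    (hk : k ∈ piAntidiag (univ : Finset (Fin n)) d) :
    coeff (Finsupp.equivFunOnFinite.symm k) (C c * (∑ i, C (x i) * X i) ^ d)
      = c * ((Nat.multinomial univ k : ℝ) * ∏ i, x i ^ k i) := by
  rw [Lpow_eq, coeff_sum]
  rw [Finset.sum_eq_single k]
  · rw [coeff_monomial, if_pos rfl]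
  · intro j hj hjk
    rw [coeff_monomial, if_neg]
    exact fun h => hjk (Finsupp.equivFunOnFinite.symm.injective h)
  · exact fun h => absurd hk h

lemma support_cLpow (n d : ℕ) (c : ℝ) (x : Fin n → ℝ) :
    (C c * (∑ i, C (x i) * X i) ^ d).support
      ⊆ (piAntidiag (univ : Finset (Fin n)) d).image (⇑Finsupp.equivFunOnFinite.symm) := by
  intro α hα
  rw [mem_support_iff, Lpow_eq, coeff_sum] at hα
  obtain ⟨k, hk, hne⟩ := Finset.exists_ne_zero_of_sum_ne_zero hα
  rw [coeff_monomial] at hne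
  refine Finset.mem_image.2 ⟨k, hk, ?_⟩
  by_contra h
  rw [if_neg h] at hne
  exact hne rfl

lemma bombieriInner_cLpow (n d : ℕ) (c : ℝ) (x : Fin n → ℝ) (hx : (∑ i, x i ^ 2) = 1) :
    bombieriInner n d (C c * (∑ i, C (x i) * X i) ^ d)
      (C c * (∑ i, C (x i) * X i) ^ d) = c ^ 2 := by
  rw [bombieriInner_self_eq_sum_superset n d _ _ (support_cLpow n d c x)]
  rw [Finset.sum_image (fun a _ b _ h => Finsupp.equivFunOnFinite.symm.injective h)]
  have hD : ((Nat.factorial d : ℕ) : ℝ) ≠ 0 := Nat.cast_ne_zero.2 (Nat.factorial_ne_zero d)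
  have key : ∀ k ∈ piAntidiag (univ : Finset (Fin n)) d,
      coeff (Finsupp.equivFunOnFinite.symm k) (C c * (∑ i, C (x i) * X i) ^ d) *
        coeff (Finsupp.equivFunOnFinite.symm k) (C c * (∑ i, C (x i) * X i) ^ d) *
        (((∏ i, Nat.factorial ((Finsupp.equivFunOnFinite.symm k) i) : ℕ) : ℝ) / (Nat.factorial d : ℝ))
      = c ^ 2 * ((Nat.multinomial univ k : ℝ) * ∏ i, (x i ^ 2) ^ k i) := by
    intro k hk
    rw [coeff_cLpow n d c x k hk]
    have hsum : ∑ i, k i = d := (Finset.mem_piAntidiag.1 hk).1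
    have hMF : ((Nat.multinomial univ k : ℕ) : ℝ) * ((∏ i, Nat.factorial (k i) : ℕ) : ℝ)
        = ((Nat.factorial d : ℕ) : ℝ) := by
      rw [← Nat.cast_mul, mul_comm, Nat.multinomial_spec, hsum]
    have hcoe : ∀ i : Fin n, (Finsupp.equivFunOnFinite.symm k) i = k i := fun i => rfl
    simp only [hcoe]
    have hp2 : ∏ i, (x i ^ 2) ^ k i = (∏ i, x i ^ k i) ^ 2 := by
      rw [← Finset.prod_pow]
      exact Finset.prod_congr rfl fun i _ => (pow_right_comm _ _ _)
    rw [hp2]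
    field_simp
    push_cast at hMF
    push_cast
    linear_combination c ^ 2 * (Nat.multinomial univ k : ℝ) * (∏ i, x i ^ k i) ^ 2 * hMF
  rw [Finset.sum_congr rfl key, ← Finset.mul_sum]
  rw [← Finset.sum_pow_eq_sum_piAntidiag univ (fun i => x i ^ 2) d, hx, one_pow, mul_one]

/-- `dist(P,Δ) ≤ |P(x)|` at every critical point `x` of `P` on the unit
sphere (i.e. every `x` with `∇ᵀP(x) = 0`). -/
theorem distDisc_le_abs_critical_value (n d : ℕ) (hn : 1 < n) (hd : 1 < d)
    (P : MvPolynomial (Fin n) ℝ) (hP : P.IsHomogeneous d)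
    (x : Fin n → ℝ) (hx : (∑ i, x i ^ 2) = 1)
    (hcrit : ∀ i, eval x (pderiv i P) - d * eval x P * x i = 0) :
    distDisc n d P ≤ |eval x P| := by
  set c := eval x P with hc
  set L : MvPolynomial (Fin n) ℝ := ∑ i, C (x i) * X i with hLdef
  set Q : MvPolynomial (Fin n) ℝ := P - C c * L ^ d with hQdef
  have hLhom : L.IsHomogeneous 1 := by
    refine IsHomogeneous.sum _ _ _ (fun i _ => ?_)
    simpa using (isHomogeneous_C (Fin n) (x i)).mul (isHomogeneous_X ℝ i)
  have hRhom : (C c * L ^ d).IsHomogeneous d := by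
    simpa using (isHomogeneous_C (Fin n) c).mul (hLhom.pow d)
  have hevalL : eval x L = 1 := by
    rw [hLdef, map_sum, ← hx]
    exact Finset.sum_congr rfl fun i _ => by simp [sq]
  have hQmem : Q ∈ realDisc n d := by
    refine ⟨hP.sub hRhom, x, hx, ?_, ?_⟩
    · simp [hQdef, hevalL, hc]
    · intro i
      have hpd : pderiv i L = C (x i) := by
        rw [hLdef, map_sum]
        rw [Finset.sum_eq_single i (fun j _ hj => by simp [pderiv_X_of_ne hj])
          (fun h => absurd (Finset.mem_univ i) h)]
        simp
      rw [hQdef, map_sub, pderiv_C_mul, pderiv_pow, hpd]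
      have h := hcrit i
      simp only [map_sub, map_mul, map_natCast, map_pow, hevalL, one_pow, mul_one, eval_C]
      rw [sub_eq_zero]
      rw [sub_eq_zero] at h
      rw [h]; ring
  have hPQ : P - Q = C c * L ^ d := by rw [hQdef]; ring
  have hnorm : bombieriNorm n d (P - Q) = |c| := by
    rw [hPQ, bombieriNorm, bombieriInner_cLpow n d c x hx, Real.sqrt_sq_eq_abs]
  refine csInf_le ⟨0, ?_⟩ ⟨Q, hQmem, hnorm.symm⟩
  rintro r ⟨Q', _, rfl⟩
  exact Real.sqrt_nonneg _
end

section
/- Let P be a homogeneous polynomial of degree d > 1 in n > 1 variables with P ∉ Δ, and let c ∈ S^{n−1} be a quasi-double point of P (so ∇ᵀP(c) = 0 and |P(c)| = dist(P,Δ) > 0). If λ is an eigenvalue of the tangential Hessian 𝓗ᵀP(c) associated with an eigenvector orthogonal to c, and λ has the same sign as P(c) (i.e. λ·P(c) > 0), then |λ| ≥ d·|P(c)| > 0. -/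
open MvPolynomial Finset

/-- The Hessian matrix of `P` at `c`. -/
noncomputable def hessMat (n : ℕ) (P : MvPolynomial (Fin n) ℝ) (c : Fin n → ℝ) :
    Matrix (Fin n) (Fin n) ℝ :=
  Matrix.of fun i j => eval c (pderiv i (pderiv j P))

/-- The orthogonal projection onto the hyperplane orthogonal to `c`, as a matrix. -/
noncomputable def projMat (n : ℕ) (c : Fin n → ℝ) : Matrix (Fin n) (Fin n) ℝ :=
  Matrix.of fun i j => (if i = j then (1 : ℝ) else 0) - c i * c j

/-- The tangential Hessian `𝓗ᵀP(c) = π(c) ∘ 𝓗P(c) ∘ π(c)`. -/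
noncomputable def hessTMat (n : ℕ) (P : MvPolynomial (Fin n) ℝ) (c : Fin n → ℝ) :
    Matrix (Fin n) (Fin n) ℝ :=
  projMat n c * hessMat n P c * projMat n c

namespace QDP
variable {n d : ℕ}


lemma bombieriInner_eq_sum (P Q : MvPolynomial (Fin n) ℝ) (s : Finset ((Fin n) →₀ ℕ))
    (hs : P.support ⊆ s) :
    bombieriInner n d P Q = ∑ α ∈ s, P.coeff α * Q.coeff α *
      (((∏ i, Nat.factorial (α i) : ℕ) : ℝ) / (Nat.factorial d : ℝ)) := by
  rw [bombieriInner, Finset.sum_subset hs]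
  intro x _ hx
  rw [MvPolynomial.notMem_support_iff.mp hx]
  ring

lemma bombieriInner_comm (P Q : MvPolynomial (Fin n) ℝ) :
    bombieriInner n d P Q = bombieriInner n d Q P := by
  rw [bombieriInner_eq_sum P Q (P.support ∪ Q.support) subset_union_left,
      bombieriInner_eq_sum Q P (P.support ∪ Q.support) subset_union_right]
  exact Finset.sum_congr rfl fun α _ => by ring

lemma bombieriInner_add_right (P Q R : MvPolynomial (Fin n) ℝ) :
    bombieriInner n d P (Q + R) = bombieriInner n d P Q + bombieriInner n d P R := by
  unfold bombieriInner
  rw [← Finset.sum_add_distrib]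
  exact Finset.sum_congr rfl fun α _ => by rw [coeff_add]; ring

lemma bombieriInner_add_left (P Q R : MvPolynomial (Fin n) ℝ) :
    bombieriInner n d (P + Q) R = bombieriInner n d P R + bombieriInner n d Q R := by
  rw [bombieriInner_comm, bombieriInner_add_right, bombieriInner_comm P,
    bombieriInner_comm Q]

lemma bombieriInner_C_mul_right (P Q : MvPolynomial (Fin n) ℝ) (a : ℝ) :
    bombieriInner n d P (C a * Q) = a * bombieriInner n d P Q := by
  unfold bombieriInner
  rw [Finset.mul_sum]
  exact Finset.sum_congr rfl fun α _ => by rw [coeff_C_mul]; ring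

lemma bombieriInner_C_mul_left (P Q : MvPolynomial (Fin n) ℝ) (a : ℝ) :
    bombieriInner n d (C a * P) Q = a * bombieriInner n d P Q := by
  rw [bombieriInner_comm, bombieriInner_C_mul_right, bombieriInner_comm]

lemma bombieriInner_monomial_left (a : (Fin n) →₀ ℕ) (q : ℝ) (S : MvPolynomial (Fin n) ℝ) :
    bombieriInner n d (monomial a q) S = q * S.coeff a *
      (((∏ i, Nat.factorial (a i) : ℕ) : ℝ) / (Nat.factorial d : ℝ)) := by
  rw [bombieriInner_eq_sum _ _ {a} support_monomial_subset, Finset.sum_singleton,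
    coeff_monomial, if_pos rfl]

lemma bombieriInner_sum_right {ι : Type*} (s : Finset ι) (P : MvPolynomial (Fin n) ℝ)
    (f : ι → MvPolynomial (Fin n) ℝ) :
    bombieriInner n d P (∑ i ∈ s, f i) = ∑ i ∈ s, bombieriInner n d P (f i) := by
  classical
  induction s using Finset.induction_on with
  | empty => simp [bombieriInner]
  | insert a s h ih => rw [Finset.sum_insert h, Finset.sum_insert h, bombieriInner_add_right, ih]

lemma degree_eq_sum (a : Fin n →₀ ℕ) : a.degree = ∑ i, a i := by
  rw [Finsupp.degree]
  exact Finset.sum_subset (Finset.subset_univ _)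
    (fun x _ hx => Finsupp.notMem_support_iff.mp hx)

lemma isHom_def {P : MvPolynomial (Fin n) ℝ} :
    P.IsHomogeneous d ↔ ∀ α : Fin n →₀ ℕ, coeff α P ≠ 0 → α.degree = d := by
  unfold MvPolynomial.IsHomogeneous IsWeightedHomogeneous
  rw [Pi.one_def, ← Finsupp.degree_eq_weight_one]

lemma coeff_pderiv (i : Fin n) (Q : MvPolynomial (Fin n) ℝ) (β : Fin n →₀ ℕ) :
    coeff β (pderiv i Q) = coeff (β + Finsupp.single i 1) Q * (β i + 1) := by
  induction Q using MvPolynomial.induction_on' with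
  | add p q hp hq => rw [map_add, coeff_add, coeff_add, hp, hq]; ring
  | monomial a q =>
    rw [pderiv_monomial, coeff_monomial, coeff_monomial]
    by_cases h : a i = 0
    · have h1 : a - Finsupp.single i 1 = a := by
        ext j; rw [Finsupp.tsub_apply]
        rcases eq_or_ne j i with rfl | hj
        · simp [h]
        · simp [Finsupp.single_eq_of_ne' (Ne.symm hj)]
      have h2 : a ≠ β + Finsupp.single i 1 := by
        intro hh
        have : a i = β i + 1 := by simp [hh, Finsupp.add_apply]
        omega
      rw [if_neg h2, h1]
      split
      · next heq => subst heq; simp [h]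
      · ring
    · have hiff : a - Finsupp.single i 1 = β ↔ a = β + Finsupp.single i 1 := by
        constructor
        · intro hh
          ext j
          rcases eq_or_ne j i with rfl | hj
          · have h3 : a j - 1 = β j := by
              simpa [Finsupp.tsub_apply] using congrArg (fun f => f j) hh
            have : a j ≠ 0 := h
            simp only [Finsupp.add_apply, Finsupp.single_eq_same]
            omega
          · have h3 : a j = β j := by
              simpa [Finsupp.tsub_apply, Finsupp.single_eq_of_ne' (Ne.symm hj)]
                using congrArg (fun f => f j) hh
            simp [Finsupp.add_apply, Finsupp.single_eq_of_ne' (Ne.symm hj), h3]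
        · intro hh; subst hh
          ext j
          rcases eq_or_ne j i with rfl | hj
          · simp [Finsupp.tsub_apply, Finsupp.add_apply]
          · simp [Finsupp.tsub_apply, Finsupp.add_apply,
              Finsupp.single_eq_of_ne' (Ne.symm hj)]
      by_cases hc : a = β + Finsupp.single i 1
      · rw [if_pos (hiff.mpr hc), if_pos hc]
        have : a i = β i + 1 := by simp [hc, Finsupp.add_apply]
        rw [this]; push_cast; ring
      · rw [if_neg (fun hh => hc (hiff.mp hh)), if_neg hc]; ring

lemma pderiv_isHomogeneous {P : MvPolynomial (Fin n) ℝ} (hP : P.IsHomogeneous d) (i : Fin n) :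
    (pderiv i P).IsHomogeneous (d - 1) := by
  rw [isHom_def] at hP ⊢
  intro β hβ
  rw [coeff_pderiv] at hβ
  have h1 : coeff (β + Finsupp.single i 1) P ≠ 0 := fun h => hβ (by rw [h]; ring)
  have h2 := hP _ h1
  have h3 : (β + Finsupp.single i 1).degree = β.degree + 1 := by
    rw [degree_eq_sum, degree_eq_sum]
    simp [Finsupp.add_apply, Finsupp.single_apply, Finset.sum_add_distrib]
  omega

lemma prod_factorial_sub_single (a : Fin n →₀ ℕ) (i : Fin n) (h : a i ≠ 0) :
    (∏ j, Nat.factorial (a j)) = a i * ∏ j, Nat.factorial ((a - Finsupp.single i 1 : Fin n →₀ ℕ) j) := by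
  have key : ∀ j, Nat.factorial (a j) =
      (if j = i then a i else 1) * Nat.factorial ((a - Finsupp.single i 1 : Fin n →₀ ℕ) j) := by
    intro j
    rcases eq_or_ne j i with rfl | hj
    · rw [if_pos rfl, Finsupp.tsub_apply, Finsupp.single_eq_same]
      rcases Nat.exists_eq_succ_of_ne_zero h with ⟨k, hk⟩
      rw [hk]; simp [Nat.factorial_succ]
    · rw [if_neg hj, Finsupp.tsub_apply, Finsupp.single_eq_of_ne' (Ne.symm hj)]
      simp
  rw [Finset.prod_congr rfl (fun j _ => key j), Finset.prod_mul_distrib]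
  congr 1
  rw [Finset.prod_ite_eq' Finset.univ i (fun _ => a i)]
  simp

lemma bombieriInner_X_mul (hd : d ≠ 0) (i : Fin n) (Q R : MvPolynomial (Fin n) ℝ) :
    bombieriInner n d Q (X i * R) =
      (1 / d) * bombieriInner n (d - 1) (pderiv i Q) R := by
  induction Q using MvPolynomial.induction_on' with
  | add p q hp hq =>
    rw [bombieriInner_add_left, map_add, bombieriInner_add_left, hp, hq]; ring
  | monomial a q =>
    rw [bombieriInner_monomial_left, pderiv_monomial, bombieriInner_monomial_left]
    classical
    rw [coeff_X_mul']
    by_cases h : a i = 0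
    · have h1 : i ∉ a.support := by simp [h]
      rw [if_neg h1, h]
      push_cast; ring
    · have h1 : i ∈ a.support := by simp [h]
      rw [if_pos h1]
      rw [prod_factorial_sub_single a i h]
      have hfd : (Nat.factorial d : ℝ) = d * Nat.factorial (d - 1) := by
        rcases Nat.exists_eq_succ_of_ne_zero hd with ⟨k, hk⟩
        subst hk; simp [Nat.factorial_succ]
      rw [hfd]
      have hd' : (d : ℝ) ≠ 0 := Nat.cast_ne_zero.mpr hd
      have hf' : (Nat.factorial (d-1) : ℝ) ≠ 0 := Nat.cast_ne_zero.mpr (Nat.factorial_ne_zero _)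
      push_cast
      field_simp

lemma euler_monomial (x : Fin n → ℝ) (a : Fin n →₀ ℕ) (q : ℝ) (i : Fin n) :
    x i * eval x (pderiv i (monomial a q)) = (a i : ℝ) * (q * ∏ j, x j ^ a j) := by
  rw [pderiv_monomial, eval_monomial]
  rw [Finsupp.prod_fintype _ _ (fun j => pow_zero (x j))]
  by_cases h : a i = 0
  · simp [h]
  · have herase : ∀ j ∈ Finset.univ.erase i,
        x j ^ ((a - Finsupp.single i 1 : Fin n →₀ ℕ) j) = x j ^ a j := by
      intro j hj
      rw [Finsupp.tsub_apply, Finsupp.single_eq_of_ne' (Ne.symm (Finset.mem_erase.mp hj).1)]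
      simp
    rw [← Finset.mul_prod_erase Finset.univ _ (Finset.mem_univ i),
        ← Finset.mul_prod_erase Finset.univ (fun j => x j ^ a j) (Finset.mem_univ i),
        Finset.prod_congr rfl herase]
    rw [Finsupp.tsub_apply, Finsupp.single_eq_same]
    rcases Nat.exists_eq_succ_of_ne_zero h with ⟨k, hk⟩
    rw [hk]
    simp only [Nat.succ_sub_one]
    rw [pow_succ]
    ring

lemma euler {P : MvPolynomial (Fin n) ℝ} (hP : P.IsHomogeneous d) (x : Fin n → ℝ) :
    ∑ i, x i * eval x (pderiv i P) = d * eval x P := by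
  conv_lhs => rw [← support_sum_monomial_coeff P]
  conv_rhs => rw [← support_sum_monomial_coeff P]
  simp only [map_sum, Finset.mul_sum]
  rw [Finset.sum_comm]
  apply Finset.sum_congr rfl
  intro α hα
  have hdeg : α.degree = d := (isHom_def.mp hP) α (mem_support_iff.mp hα)
  calc ∑ i, x i * eval x (pderiv i (monomial α (coeff α P)))
      = ∑ i, (α i : ℝ) * (coeff α P * ∏ j, x j ^ α j) :=
        Finset.sum_congr rfl fun i _ => euler_monomial x α (coeff α P) i
    _ = (∑ i, (α i : ℝ)) * (coeff α P * ∏ j, x j ^ α j) := by rw [Finset.sum_mul]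
    _ = d * eval x (monomial α (coeff α P)) := by
        rw [eval_monomial, Finsupp.prod_fintype _ _ (fun j => pow_zero (x j))]
        congr 1
        rw [← hdeg, degree_eq_sum]
        push_cast
        rfl

lemma reproA (x : Fin n → ℝ) : ∀ (d : ℕ) (Q : MvPolynomial (Fin n) ℝ), Q.IsHomogeneous d →
    bombieriInner n d Q ((∑ i, C (x i) * X i) ^ d) = eval x Q := by
  intro d
  induction d with
  | zero =>
    intro Q hQ
    rw [pow_zero, bombieriInner, eval_eq']
    apply Finset.sum_congr rfl
    intro α hα
    have h0 : α = 0 := (Finsupp.degree_eq_zero_iff α).mp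
      ((isHom_def.mp hQ) α (mem_support_iff.mp hα))
    subst h0
    norm_num [coeff_one]
  | succ d ih =>
    intro Q hQ
    rw [pow_succ, Finset.mul_sum]
    rw [Finset.sum_congr rfl (fun i (_ : i ∈ Finset.univ) =>
      (by ring : (∑ j, C (x j) * X j)^d * (C (x i) * X i)
        = C (x i) * (X i * (∑ j, C (x j) * X j)^d)))]
    rw [bombieriInner_sum_right]
    have hd1 : (d + 1) ≠ 0 := Nat.succ_ne_zero d
    have hstep : ∀ i : Fin n, bombieriInner n (d+1) Q
        (C (x i) * (X i * (∑ j, C (x j) * X j)^d))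
        = x i * ((1/((d:ℝ)+1)) * eval x (pderiv i Q)) := by
      intro i
      rw [bombieriInner_C_mul_right, bombieriInner_X_mul hd1]
      rw [Nat.succ_sub_one]
      rw [ih (pderiv i Q) (by simpa using pderiv_isHomogeneous hQ i)]
      push_cast
      ring
    rw [Finset.sum_congr rfl fun i _ => hstep i]
    have := euler hQ x
    have hne : ((d:ℝ)+1) ≠ 0 := by positivity
    calc ∑ i, x i * (1/((d:ℝ)+1) * eval x (pderiv i Q))
        = (1/((d:ℝ)+1)) * ∑ i, x i * eval x (pderiv i Q) := by
          rw [Finset.mul_sum]; exact Finset.sum_congr rfl fun i _ => by ring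
      _ = (1/((d:ℝ)+1)) * (((d:ℕ):ℝ)+1) * eval x Q := by
          rw [euler hQ x]; push_cast; ring
      _ = eval x Q := by field_simp

lemma reproB (hd : d ≠ 0) (x e : Fin n → ℝ) (Q : MvPolynomial (Fin n) ℝ)
    (hQ : Q.IsHomogeneous d) :
    bombieriInner n d Q ((∑ i, C (x i) * X i) ^ (d-1) * (∑ i, C (e i) * X i)) =
      (1 / d) * ∑ i, e i * eval x (pderiv i Q) := by
  rw [Finset.mul_sum]
  rw [Finset.sum_congr rfl (fun i (_ : i ∈ Finset.univ) =>
      (by ring : (∑ j, C (x j) * X j)^(d-1) * (C (e i) * X i)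
        = C (e i) * (X i * (∑ j, C (x j) * X j)^(d-1))))]
  rw [bombieriInner_sum_right, Finset.mul_sum]
  apply Finset.sum_congr rfl
  intro i _
  rw [bombieriInner_C_mul_right, bombieriInner_X_mul hd,
    reproA x (d-1) (pderiv i Q) (pderiv_isHomogeneous hQ i)]
  ring

lemma linform_isHomogeneous (x : Fin n → ℝ) :
    (∑ i, C (x i) * X i : MvPolynomial (Fin n) ℝ).IsHomogeneous 1 :=
  IsHomogeneous.sum _ _ _ fun i _ => isHomogeneous_C_mul_X (x i) i

lemma eval_linform (x y : Fin n → ℝ) :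
    eval y (∑ i, C (x i) * X i) = ∑ i, x i * y i := by simp

lemma pderiv_linform (x : Fin n → ℝ) (j : Fin n) :
    pderiv j (∑ i, C (x i) * X i) = C (x j) := by
  classical
  rw [map_sum]
  rw [Finset.sum_congr rfl (fun i (_ : i ∈ Finset.univ) => pderiv_C_mul)]
  simp [pderiv_X, Pi.single_apply, Finset.sum_ite_eq']

lemma master (hd : d ≠ 0) (P : MvPolynomial (Fin n) ℝ) (hP : P.IsHomogeneous d)
    (x : Fin n → ℝ) (hx : (∑ i, x i ^ 2) = 1) :
    distDisc n d P ≤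
      Real.sqrt ((eval x P)^2 + (∑ i, (eval x (pderiv i P) - d * eval x P * x i)^2) / d) := by
  classical
  set a : ℝ := eval x P with ha
  set w : Fin n → ℝ := fun i => eval x (pderiv i P) - d * a * x i with hw
  set L : MvPolynomial (Fin n) ℝ := ∑ i, C (x i) * X i with hL
  set Lw : MvPolynomial (Fin n) ℝ := ∑ i, C (w i) * X i with hLw
  have hxx : ∑ i, x i * x i = 1 := by
    rw [← hx]; exact Finset.sum_congr rfl fun i _ => (pow_two (x i)).symm
  have hwx : ∑ i, w i * x i = 0 := by
    have he := euler hP x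
    have : ∑ i, w i * x i = (∑ i, x i * eval x (pderiv i P)) - d * a * ∑ i, x i * x i := by
      rw [Finset.mul_sum, ← Finset.sum_sub_distrib]
      exact Finset.sum_congr rfl fun i _ => by rw [hw]; ring
    rw [this, he, hxx]; ring
  have hLhom := linform_isHomogeneous x
  have hLwhom := linform_isHomogeneous w
  set R : MvPolynomial (Fin n) ℝ := C a * L ^ d + L ^ (d-1) * Lw with hR
  have hRhom : R.IsHomogeneous d := by
    apply IsHomogeneous.add
    · have := (hLhom.pow d).C_mul a
      simpa using this
    · have := (hLhom.pow (d-1)).mul hLwhom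
      have hdd : d - 1 + 1 = d := by omega
      simpa [hdd] using this
  have hevalL : eval x L = 1 := by rw [hL, eval_linform, hxx]
  have hevalLw : eval x Lw = 0 := by rw [hLw, eval_linform, hwx]
  have hevalR : eval x R = a := by
    rw [hR]; simp [hevalL, hevalLw]
  have hpderivR : ∀ j, eval x (pderiv j R) = d * a * x j + w j := by
    intro j
    rw [hR, map_add, pderiv_C_mul, pderiv_pow, pderiv_mul, pderiv_pow,
      pderiv_linform, pderiv_linform]
    simp only [map_add, map_mul, map_pow, eval_C, hevalL, hevalLw, map_natCast]
    rw [one_pow, one_pow]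
    ring
  have hpderivP : ∀ j, eval x (pderiv j P) = d * a * x j + w j := by
    intro j; rw [hw]; ring
  -- Q ∈ realDisc
  have hQmem : P - R ∈ realDisc n d := by
    refine ⟨hP.sub hRhom, x, hx, ?_, ?_⟩
    · rw [map_sub, hevalR, ← ha]; ring
    · intro i
      rw [map_sub, map_sub, hpderivR, hpderivP]
      ring
  -- inner product of R with itself
  have hRR : bombieriInner n d R R = a^2 + (∑ i, (w i)^2) / d := by
    have h1 : bombieriInner n d R R =
        a * bombieriInner n d R (L ^ d) + bombieriInner n d R (L^(d-1) * Lw) := by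
      rw [hR]
      conv_lhs => rw [bombieriInner_add_right, bombieriInner_C_mul_right]
    rw [h1, reproA x d R hRhom, reproB hd x w R hRhom, hevalR]
    have h2 : ∑ i, w i * eval x (pderiv i R) = ∑ i, (w i)^2 := by
      have h3 : ∑ i, w i * eval x (pderiv i R)
          = d * a * (∑ i, w i * x i) + ∑ i, (w i)^2 := by
        rw [Finset.mul_sum, ← Finset.sum_add_distrib]
        apply Finset.sum_congr rfl
        intro i _
        rw [hpderivR]; ring
      rw [h3, hwx]; ring
    rw [h2]
    ring
  have hPQ : P - (P - R) = R := by ring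
  have hmem : bombieriNorm n d R ∈
      {r | ∃ Q ∈ realDisc n d, r = bombieriNorm n d (P - Q)} :=
    ⟨P - R, hQmem, by rw [hPQ]⟩
  have hbdd : BddBelow {r | ∃ Q ∈ realDisc n d, r = bombieriNorm n d (P - Q)} := by
    refine ⟨0, ?_⟩
    rintro r ⟨Q, _, rfl⟩
    exact Real.sqrt_nonneg _
  calc distDisc n d P ≤ bombieriNorm n d R := csInf_le hbdd hmem
    _ = Real.sqrt (a^2 + (∑ i, (w i)^2) / d) := by rw [bombieriNorm, hRR]
    _ = _ := by rw [ha, hw]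

noncomputable def lineP (c u : Fin n → ℝ) (Q : MvPolynomial (Fin n) ℝ) : Polynomial ℝ :=
  MvPolynomial.aeval (fun i => Polynomial.C (c i) + Polynomial.C (u i) * Polynomial.X) Q

lemma lineP_eval (c u : Fin n → ℝ) (Q : MvPolynomial (Fin n) ℝ) (t : ℝ) :
    (lineP c u Q).eval t = eval (fun i => c i + u i * t) Q := by
  have h := MvPolynomial.comp_aeval
    (fun i => Polynomial.C (c i) + Polynomial.C (u i) * Polynomial.X)
    (Polynomial.aeval t (R := ℝ))
  have h2 := AlgHom.congr_fun h Q
  simp only [AlgHom.comp_apply] at h2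
  rw [lineP, ← Polynomial.coe_aeval_eq_eval, h2]
  simp only [map_add, map_mul, Polynomial.aeval_C, Polynomial.aeval_X]
  show MvPolynomial.aeval _ Q = _
  rw [show (MvPolynomial.aeval (R := ℝ) (fun i => (algebraMap ℝ ℝ) (c i) + (algebraMap ℝ ℝ) (u i) * t) : MvPolynomial (Fin n) ℝ →ₐ[ℝ] ℝ) Q = MvPolynomial.eval (fun i => (algebraMap ℝ ℝ) (c i) + (algebraMap ℝ ℝ) (u i) * t) Q from rfl]
  norm_num

lemma derivative_aeval (f : Fin n → Polynomial ℝ) (Q : MvPolynomial (Fin n) ℝ) :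
    Polynomial.derivative (MvPolynomial.aeval f Q) =
      ∑ i, MvPolynomial.aeval f (pderiv i Q) * Polynomial.derivative (f i) := by
  classical
  induction Q using MvPolynomial.induction_on with
  | C a => simp
  | add p q hp hq =>
    rw [map_add, map_add, hp, hq, ← Finset.sum_add_distrib]
    apply Finset.sum_congr rfl
    intro i _
    rw [map_add, map_add, add_mul]
  | mul_X p i hp =>
    rw [map_mul, aeval_X, Polynomial.derivative_mul, hp]
    have : ∀ j : Fin n, MvPolynomial.aeval f (pderiv j (p * X i)) * Polynomial.derivative (f j)
        = (MvPolynomial.aeval f (pderiv j p) * Polynomial.derivative (f j)) * f i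
          + (if j = i then MvPolynomial.aeval f p * Polynomial.derivative (f i) else 0) := by
      intro j
      rw [pderiv_mul, pderiv_X, map_add, map_mul, map_mul, aeval_X]
      rcases eq_or_ne j i with rfl | hj
      · rw [if_pos rfl, Pi.single_eq_same]
        simp only [map_one, mul_one]
        ring
      · rw [if_neg hj, Pi.single_eq_of_ne (Ne.symm hj)]
        simp only [map_zero, mul_zero, add_zero]
        ring
    rw [Finset.sum_congr rfl fun j _ => this j, Finset.sum_add_distrib,
      ← Finset.sum_mul, Finset.sum_ite_eq' Finset.univ i]
    simp

lemma derivative_lineP (c u : Fin n → ℝ) (Q : MvPolynomial (Fin n) ℝ) :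
    Polynomial.derivative (lineP c u Q) =
      ∑ i, lineP c u (pderiv i Q) * Polynomial.C (u i) := by
  rw [lineP, derivative_aeval]
  apply Finset.sum_congr rfl
  intro i _
  congr 1
  simp

lemma lineP_coeff_zero (c u : Fin n → ℝ) (Q : MvPolynomial (Fin n) ℝ) :
    (lineP c u Q).coeff 0 = eval c Q := by
  rw [Polynomial.coeff_zero_eq_eval_zero, lineP_eval]
  simp

lemma lineP_coeff_one (c u : Fin n → ℝ) (Q : MvPolynomial (Fin n) ℝ) :
    (lineP c u Q).coeff 1 = ∑ i, u i * eval c (pderiv i Q) := by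
  have h : (lineP c u Q).coeff 1 = (Polynomial.derivative (lineP c u Q)).coeff 0 := by
    rw [Polynomial.coeff_derivative]
    push_cast; ring
  rw [h, derivative_lineP, Polynomial.finset_sum_coeff]
  apply Finset.sum_congr rfl
  intro i _
  rw [Polynomial.coeff_mul_C, lineP_coeff_zero]
  ring

lemma lineP_coeff_two (c u : Fin n → ℝ) (Q : MvPolynomial (Fin n) ℝ) :
    2 * (lineP c u Q).coeff 2 = ∑ i, (∑ j, u j * eval c (pderiv j (pderiv i Q))) * u i := by
  have h : (lineP c u Q).coeff 2 * 2 = (Polynomial.derivative (lineP c u Q)).coeff 1 := by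
    rw [Polynomial.coeff_derivative]
    push_cast; ring
  rw [mul_comm, h, derivative_lineP, Polynomial.finset_sum_coeff]
  apply Finset.sum_congr rfl
  intro i _
  rw [Polynomial.coeff_mul_C, lineP_coeff_one]

lemma coeff1_mul (p q : Polynomial ℝ) :
    (p*q).coeff 1 = p.coeff 0 * q.coeff 1 + p.coeff 1 * q.coeff 0 := by
  rw [Polynomial.coeff_mul, Finset.Nat.sum_antidiagonal_eq_sum_range_succ_mk]
  rw [Finset.sum_range_succ, Finset.sum_range_succ]
  norm_num [add_comm]

lemma coeff2_mul (p q : Polynomial ℝ) :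
    (p*q).coeff 2 = p.coeff 0 * q.coeff 2 + p.coeff 1 * q.coeff 1 + p.coeff 2 * q.coeff 0 := by
  rw [Polynomial.coeff_mul, Finset.Nat.sum_antidiagonal_eq_sum_range_succ_mk]
  rw [Finset.sum_range_succ, Finset.sum_range_succ, Finset.sum_range_succ]
  norm_num

lemma exists_pos_eval_neg (q : Polynomial ℝ) (h0 : q.coeff 0 = 0) (h1 : q.coeff 1 = 0)
    (h2 : q.coeff 2 < 0) : ∃ t : ℝ, 0 < t ∧ q.eval t < 0 := by
  have hdvd : (Polynomial.X : Polynomial ℝ)^2 ∣ q := by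
    rw [Polynomial.X_pow_dvd_iff]
    intro k hk
    interval_cases k
    · exact h0
    · exact h1
  obtain ⟨g, rfl⟩ := hdvd
  have hg0 : g.coeff 0 < 0 := by
    have : ((Polynomial.X : Polynomial ℝ)^2 * g).coeff (0 + 2) = g.coeff 0 :=
      Polynomial.coeff_X_pow_mul g 2 0
    rw [show (0+2) = 2 from rfl] at this
    rwa [this] at h2
  have hcont : ContinuousAt (fun t : ℝ => g.eval t) 0 :=
    (Polynomial.continuous g).continuousAt
  have hg00 : g.eval 0 = g.coeff 0 := by
    rw [Polynomial.coeff_zero_eq_eval_zero]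
  rw [Metric.continuousAt_iff] at hcont
  obtain ⟨δ, hδ, hball⟩ := hcont (-(g.coeff 0)) (by linarith)
  refine ⟨δ/2, by positivity, ?_⟩
  have hdist : dist (δ/2) (0:ℝ) < δ := by
    rw [Real.dist_eq, sub_zero, abs_of_pos (by positivity)]
    linarith
  have hb := hball hdist
  rw [Real.dist_eq, hg00] at hb
  have hgneg : g.eval (δ/2) < 0 := by
    have := abs_lt.mp hb
    linarith [this.2]
  rw [Polynomial.eval_mul, Polynomial.eval_pow, Polynomial.eval_X]
  have : (0:ℝ) < (δ/2)^2 := by positivity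
  exact mul_neg_of_pos_of_neg this hgneg

lemma pderiv_comm (i j : Fin n) (Q : MvPolynomial (Fin n) ℝ) :
    pderiv i (pderiv j Q) = pderiv j (pderiv i Q) := by
  apply MvPolynomial.ext
  intro β
  rw [coeff_pderiv, coeff_pderiv, coeff_pderiv, coeff_pderiv]
  rcases eq_or_ne i j with rfl | hij
  · rfl
  · have h1 : β + Finsupp.single i 1 + Finsupp.single j 1
        = β + Finsupp.single j 1 + Finsupp.single i 1 := by
      rw [add_assoc, add_assoc, add_comm (Finsupp.single i 1)]
    have h2 : (β + Finsupp.single i 1 : Fin n →₀ ℕ) j = β j := by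
      rw [Finsupp.add_apply, Finsupp.single_eq_of_ne' hij, add_zero]
    have h3 : (β + Finsupp.single j 1 : Fin n →₀ ℕ) i = β i := by
      rw [Finsupp.add_apply, Finsupp.single_eq_of_ne' (Ne.symm hij), add_zero]
    rw [h1, h2, h3]
    ring

lemma eval_smul_homog {P : MvPolynomial (Fin n) ℝ} (hP : P.IsHomogeneous d)
    (r : ℝ) (x : Fin n → ℝ) :
    eval (fun i => r * x i) P = r^d * eval x P := by
  rw [eval_eq', eval_eq', Finset.mul_sum]
  apply Finset.sum_congr rfl
  intro α hα
  have hdeg : α.degree = d := (isHom_def.mp hP) α (mem_support_iff.mp hα)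
  have : ∏ i, (r * x i) ^ α i = r ^ d * ∏ i, x i ^ α i := by
    simp only [mul_pow]
    rw [Finset.prod_mul_distrib, Finset.prod_pow_eq_pow_sum]
    rw [← degree_eq_sum, hdeg]
  rw [this]
  ring

lemma s_coeff0 : ((1 : Polynomial ℝ) + Polynomial.X^2).coeff 0 = 1 := by
  simp [Polynomial.coeff_one, Polynomial.coeff_X_pow]
lemma s_coeff1 : ((1 : Polynomial ℝ) + Polynomial.X^2).coeff 1 = 0 := by
  simp [Polynomial.coeff_one, Polynomial.coeff_X_pow]
lemma s_coeff2 : ((1 : Polynomial ℝ) + Polynomial.X^2).coeff 2 = 1 := by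
  simp [Polynomial.coeff_one, Polynomial.coeff_X_pow]

lemma sPow_coeff (m : ℕ) :
    (((1 : Polynomial ℝ) + Polynomial.X^2)^m).coeff 0 = 1 ∧
    (((1 : Polynomial ℝ) + Polynomial.X^2)^m).coeff 1 = 0 ∧
    (((1 : Polynomial ℝ) + Polynomial.X^2)^m).coeff 2 = (m : ℝ) := by
  induction m with
  | zero => norm_num [Polynomial.coeff_one]
  | succ m ih =>
    obtain ⟨i0, i1, i2⟩ := ih
    rw [pow_succ]
    refine ⟨?_, ?_, ?_⟩
    · rw [Polynomial.mul_coeff_zero, i0, s_coeff0]; ring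
    · rw [coeff1_mul, i0, i1, s_coeff0, s_coeff1]; ring
    · rw [coeff2_mul, i0, i1, i2, s_coeff0, s_coeff1, s_coeff2]; push_cast; ring

end QDP

open QDP

/-- at a quasi-double point `c` of `P`, every eigenvalue `λ` of the
tangential Hessian `𝓗ᵀP(c)` associated with an eigenvector orthogonal to `c` and having
the same sign as `P(c)` satisfies `|λ| ≥ d·|P(c)| > 0`. -/
theorem quasi_double_point_eigenvalue_bound (n d : ℕ) (hn : 1 < n) (hd : 1 < d)
    (P : MvPolynomial (Fin n) ℝ) (hP : P.IsHomogeneous d)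
    (c : Fin n → ℝ) (hc : (∑ i, c i ^ 2) = 1)
    (hcrit : ∀ i, eval c (pderiv i P) - d * eval c P * c i = 0)
    (hval : |eval c P| = distDisc n d P) (hpos : 0 < distDisc n d P)
    (lam : ℝ) (v : Fin n → ℝ) (hv : v ≠ 0) (hvc : (∑ i, v i * c i) = 0)
    (heig : (hessTMat n P c).mulVec v = lam • v)
    (hsign : 0 < lam * eval c P) :
    d * |eval c P| ≤ |lam| ∧ 0 < d * |eval c P| := by
  have hd0 : d ≠ 0 := by omega
  have hdR : (0:ℝ) < d := by exact_mod_cast Nat.pos_of_ne_zero hd0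
  set a : ℝ := eval c P with ha
  have habs : 0 < |a| := by rw [hval]; exact hpos
  have hgoal2 : 0 < (d:ℝ) * |a| := mul_pos hdR habs
  refine ⟨?_, hgoal2⟩
  by_contra hcon
  push_neg at hcon
  -- hcon : |lam| < d * |a|
  have hane : a ≠ 0 := by intro h; rw [h, abs_zero] at habs; exact lt_irrefl 0 habs
  have hkey : lam * (lam - d * a) < 0 := by
    rcases lt_trichotomy a 0 with hneg | hzero | hposa
    · have hlamneg : lam < 0 := by nlinarith
      have : |a| = -a := abs_of_neg hneg
      rw [this] at hcon
      have : |lam| = -lam := abs_of_neg hlamneg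
      rw [this] at hcon
      have : d * a < lam := by linarith
      exact mul_neg_of_neg_of_pos hlamneg (by linarith)
    · exact absurd hzero hane
    · have hlampos : 0 < lam := by nlinarith
      rw [abs_of_pos hposa, abs_of_pos hlampos] at hcon
      exact mul_neg_of_pos_of_neg hlampos (by linarith)
  -- normalize v
  have hv2pos : 0 < ∑ i, v i ^ 2 := by
    obtain ⟨i, hi⟩ := Function.ne_iff.mp hv
    have hsq : 0 < v i ^ 2 := by
      have h1 : 0 < |v i| := abs_pos.mpr hi
      calc (0:ℝ) < |v i| * |v i| := mul_pos h1 h1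
        _ = v i ^ 2 := by rw [← abs_mul, abs_mul_self, sq]
    exact Finset.sum_pos' (fun j _ => sq_nonneg _) ⟨i, Finset.mem_univ i, hsq⟩
  set nv : ℝ := Real.sqrt (∑ i, v i ^ 2) with hnv
  have hnvpos : 0 < nv := Real.sqrt_pos.mpr hv2pos
  have hnv2 : nv^2 = ∑ i, v i ^ 2 := Real.sq_sqrt hv2pos.le
  set u : Fin n → ℝ := fun i => v i / nv with hu
  have hu2 : ∑ i, u i ^ 2 = 1 := by
    rw [hu]
    simp only [div_pow]
    rw [← Finset.sum_div, ← hnv2, div_self (by positivity)]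
  have huc : ∑ i, u i * c i = 0 := by
    rw [hu]
    simp only [div_mul_eq_mul_div]
    rw [← Finset.sum_div, hvc, zero_div]
  have hcrit' : ∀ i, eval c (pderiv i P) = d * a * c i := by
    intro i; have := hcrit i; linarith
  -- eigen extraction
  have hπv : (projMat n c).mulVec v = v := by
    funext i
    simp only [Matrix.mulVec, dotProduct, projMat, Matrix.of_apply]
    have expand : ∀ j, ((if i = j then (1:ℝ) else 0) - c i * c j) * v j
        = (if i = j then v j else 0) - c i * (v j * c j) := by
      intro j; split <;> ring
    rw [Finset.sum_congr rfl fun j _ => expand j, Finset.sum_sub_distrib,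
      Finset.sum_ite_eq Finset.univ i, ← Finset.mul_sum, hvc]
    simp
  have heig2 : (projMat n c).mulVec ((hessMat n P c).mulVec v) = lam • v := by
    have : (hessTMat n P c).mulVec v
        = (projMat n c).mulVec ((hessMat n P c).mulVec ((projMat n c).mulVec v)) := by
      rw [hessTMat, ← Matrix.mulVec_mulVec, ← Matrix.mulVec_mulVec]
    rw [this, hπv] at heig
    exact heig
  set Hv : Fin n → ℝ := (hessMat n P c).mulVec v with hHv
  have hHvj : ∀ i, Hv i = ∑ j, eval c (pderiv i (pderiv j P)) * v j := by
    intro i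
    simp only [hHv, Matrix.mulVec, dotProduct, hessMat, Matrix.of_apply]
  have hcHv : ∑ j, c j * Hv j = 0 := by
    have hswap : ∑ j, c j * Hv j = ∑ k, (∑ j, c j * eval c (pderiv j (pderiv k P))) * v k := by
      have h1 : ∀ j : Fin n, c j * Hv j = ∑ k, c j * (eval c (pderiv j (pderiv k P)) * v k) := by
        intro j; rw [hHvj j, Finset.mul_sum]
      rw [Finset.sum_congr rfl fun j _ => h1 j, Finset.sum_comm]
      apply Finset.sum_congr rfl
      intro k _
      rw [Finset.sum_mul]
      apply Finset.sum_congr rfl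
      intro j _
      ring
    rw [hswap]
    have heul : ∀ k : Fin n, ∑ j, c j * eval c (pderiv j (pderiv k P))
        = ((d-1 : ℕ) : ℝ) * eval c (pderiv k P) := fun k =>
      euler (pderiv_isHomogeneous hP k) c
    have h2 : ∀ k : Fin n, (∑ j, c j * eval c (pderiv j (pderiv k P))) * v k
        = (((d-1:ℕ):ℝ) * (d:ℝ) * a) * (v k * c k) := by
      intro k; rw [heul k, hcrit' k]; ring
    rw [Finset.sum_congr rfl fun k _ => h2 k, ← Finset.mul_sum, hvc, mul_zero]
  have hHveq : ∀ i, Hv i = lam * v i := by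
    intro i
    have h1 := congrFun heig2 i
    simp only [Matrix.mulVec, dotProduct, projMat, Matrix.of_apply, Pi.smul_apply,
      smul_eq_mul] at h1
    have expand : ∀ j, ((if i = j then (1:ℝ) else 0) - c i * c j) * Hv j
        = (if i = j then Hv j else 0) - c i * (c j * Hv j) := by
      intro j; split <;> ring
    rw [Finset.sum_congr rfl fun j _ => expand j, Finset.sum_sub_distrib,
      Finset.sum_ite_eq Finset.univ i, ← Finset.mul_sum, hcHv] at h1
    simpa using h1
  have hHu : ∀ i, ∑ j, eval c (pderiv i (pderiv j P)) * u j = lam * u i := by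
    intro i
    rw [hu]
    simp only [div_eq_inv_mul]
    calc ∑ j, eval c (pderiv i (pderiv j P)) * (nv⁻¹ * v j)
        = nv⁻¹ * ∑ j, eval c (pderiv i (pderiv j P)) * v j := by
          rw [Finset.mul_sum]; exact Finset.sum_congr rfl fun j _ => by ring
      _ = nv⁻¹ * (lam * v i) := by rw [← hHvj i, hHveq i]
      _ = lam * (nv⁻¹ * v i) := by ring
  have hHuT : ∀ i, ∑ j, u j * eval c (pderiv j (pderiv i P)) = lam * u i := by
    intro i
    have h1 : ∀ j : Fin n, u j * eval c (pderiv j (pderiv i P))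
        = eval c (pderiv i (pderiv j P)) * u j := by
      intro j; rw [pderiv_comm j i P]; ring
    rw [Finset.sum_congr rfl fun j _ => h1 j]
    exact hHu i
  have huHu : ∑ i, (∑ j, u j * eval c (pderiv j (pderiv i P))) * u i = lam := by
    have h1 : ∀ i : Fin n, (∑ j, u j * eval c (pderiv j (pderiv i P))) * u i
        = lam * u i ^ 2 := by
      intro i; rw [hHuT i]; ring
    rw [Finset.sum_congr rfl fun i _ => h1 i, ← Finset.mul_sum, hu2, mul_one]
  -- polynomial setup
  set s : Polynomial ℝ := 1 + Polynomial.X^2 with hs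
  set p : Polynomial ℝ := lineP c u P with hp
  set q : Fin n → Polynomial ℝ := fun i => lineP c u (pderiv i P) with hq
  set yy : Fin n → Polynomial ℝ := fun i => Polynomial.C (c i) + Polynomial.C (u i) * Polynomial.X with hyy
  set rr : Fin n → Polynomial ℝ := fun i => s * q i - Polynomial.C (d:ℝ) * p * yy i with hrr
  set G : Polynomial ℝ := Polynomial.C (d:ℝ) * s^2 * p^2 + s * (∑ i, (rr i)^2)
    - Polynomial.C ((d:ℝ) * a^2) * s^(d+2) with hG
  have hp0 : p.coeff 0 = a := by rw [hp, lineP_coeff_zero, ha]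
  have hp1 : p.coeff 1 = 0 := by
    rw [hp, lineP_coeff_one]
    have h1 : ∀ i : Fin n, u i * eval c (pderiv i P) = ((d:ℝ)*a) * (u i * c i) := by
      intro i; rw [hcrit' i]; ring
    rw [Finset.sum_congr rfl fun i _ => h1 i, ← Finset.mul_sum, huc, mul_zero]
  have hp2 : 2 * p.coeff 2 = lam := by rw [hp, lineP_coeff_two]; exact huHu
  have hq0 : ∀ i, (q i).coeff 0 = d * a * c i := by
    intro i; rw [hq]; simp only []; rw [lineP_coeff_zero, hcrit' i]
  have hq1 : ∀ i, (q i).coeff 1 = lam * u i := by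
    intro i; rw [hq]; simp only []; rw [lineP_coeff_one]; exact hHuT i
  have hy0 : ∀ i, (yy i).coeff 0 = c i := by
    intro i; rw [hyy]; simp
  have hy1 : ∀ i, (yy i).coeff 1 = u i := by
    intro i; rw [hyy]; simp
  have hy2 : ∀ i, (yy i).coeff 2 = 0 := by
    intro i; rw [hyy]
    simp [Polynomial.coeff_one, Polynomial.coeff_C]
  have hs0 : s.coeff 0 = 1 := by
    have := (sPow_coeff 1).1; rwa [pow_one] at this
  have hs1 : s.coeff 1 = 0 := by
    have := (sPow_coeff 1).2.1; rwa [pow_one] at this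
  have hs2 : s.coeff 2 = 1 := by
    have := (sPow_coeff 1).2.2; rw [pow_one] at this; rw [this]; norm_num
  have hCd : ∀ k, (Polynomial.C (d:ℝ) * p).coeff k = d * p.coeff k := by
    intro k; rw [Polynomial.coeff_C_mul]
  have hr0 : ∀ i, (rr i).coeff 0 = 0 := by
    intro i
    rw [hrr]; simp only []
    rw [Polynomial.coeff_sub, Polynomial.mul_coeff_zero, Polynomial.mul_coeff_zero,
      hCd 0, hs0, hq0 i, hy0 i, hp0]
    ring
  have hr1 : ∀ i, (rr i).coeff 1 = (lam - d * a) * u i := by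
    intro i
    rw [hrr]; simp only []
    rw [Polynomial.coeff_sub, coeff1_mul, coeff1_mul,
      hCd 0, hCd 1, hs0, hs1, hq0 i, hq1 i, hy0 i, hy1 i, hp0, hp1]
    ring
  have hsq : ∀ i : Fin n, (rr i)^2 = rr i * rr i := fun i => sq (rr i)
  have hsum0 : (∑ i, (rr i)^2).coeff 0 = 0 := by
    rw [Polynomial.finset_sum_coeff]
    apply Finset.sum_eq_zero
    intro i _
    rw [hsq i, Polynomial.mul_coeff_zero, hr0 i, mul_zero]
  have hsum1 : (∑ i, (rr i)^2).coeff 1 = 0 := by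
    rw [Polynomial.finset_sum_coeff]
    apply Finset.sum_eq_zero
    intro i _
    rw [hsq i, coeff1_mul, hr0 i]
    ring
  have hsum2 : (∑ i, (rr i)^2).coeff 2 = (lam - d*a)^2 := by
    rw [Polynomial.finset_sum_coeff]
    have h1 : ∀ i : Fin n, ((rr i)^2).coeff 2 = (lam - ↑d*a)^2 * u i ^ 2 := by
      intro i; rw [hsq i, coeff2_mul, hr0 i, hr1 i]; ring
    rw [Finset.sum_congr rfl fun i _ => h1 i, ← Finset.mul_sum, hu2, mul_one]
  have hsp0 : (s^(d+2)).coeff 0 = 1 := (sPow_coeff (d+2)).1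
  have hsp1 : (s^(d+2)).coeff 1 = 0 := (sPow_coeff (d+2)).2.1
  have hsp2 : (s^(d+2)).coeff 2 = ((d+2 : ℕ) : ℝ) := (sPow_coeff (d+2)).2.2
  have hs20 : (s^2).coeff 0 = 1 := (sPow_coeff 2).1
  have hs21 : (s^2).coeff 1 = 0 := (sPow_coeff 2).2.1
  have hs22 : (s^2).coeff 2 = ((2:ℕ):ℝ) := (sPow_coeff 2).2.2
  have hA0 : ∀ k, (Polynomial.C (d:ℝ) * s^2).coeff k = d * (s^2).coeff k := by
    intro k; rw [Polynomial.coeff_C_mul]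
  have hpp0 : (p*p).coeff 0 = a * a := by rw [Polynomial.mul_coeff_zero, hp0]
  have hpp1 : (p*p).coeff 1 = 0 := by rw [coeff1_mul, hp0, hp1]; ring
  have hpp2 : (p*p).coeff 2 = a * lam := by
    rw [coeff2_mul, hp0, hp1]
    have : a * p.coeff 2 + 0 * 0 + p.coeff 2 * a = a * (2 * p.coeff 2) := by ring
    rw [this, hp2]
  have hppsq : p^2 = p * p := sq p
  have hG0 : G.coeff 0 = 0 := by
    rw [hG, Polynomial.coeff_sub, Polynomial.coeff_add,
      Polynomial.mul_coeff_zero (Polynomial.C (d:ℝ) * s^2) (p^2),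
      Polynomial.mul_coeff_zero s (∑ i, (rr i)^2),
      Polynomial.coeff_C_mul, Polynomial.coeff_C_mul,
      hs20, hppsq, hpp0, hsum0, hs0, hsp0]
    push_cast; ring
  have hG1 : G.coeff 1 = 0 := by
    rw [hG, Polynomial.coeff_sub, Polynomial.coeff_add,
      coeff1_mul (Polynomial.C (d:ℝ) * s^2) (p^2),
      coeff1_mul s (∑ i, (rr i)^2),
      Polynomial.coeff_C_mul, Polynomial.coeff_C_mul, Polynomial.coeff_C_mul,
      hs20, hs21, hppsq, hpp0, hpp1, hsum0, hsum1, hs0, hs1, hsp1]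
    push_cast; ring
  have hG2 : G.coeff 2 = lam * (lam - d * a) := by
    rw [hG, Polynomial.coeff_sub, Polynomial.coeff_add,
      coeff2_mul (Polynomial.C (d:ℝ) * s^2) (p^2),
      coeff2_mul s (∑ i, (rr i)^2),
      Polynomial.coeff_C_mul, Polynomial.coeff_C_mul, Polynomial.coeff_C_mul,
      Polynomial.coeff_C_mul, hs20, hs21, hs22, hppsq,
      hpp0, hpp1, hpp2, hsum0, hsum1, hsum2, hs0, hs1, hs2, hsp2]
    push_cast; ring
  obtain ⟨t, htpos, hGt⟩ := exists_pos_eval_neg G hG0 hG1 (by rw [hG2]; exact hkey)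
  -- geometry
  set e : ℝ := 1 + t^2 with he
  have hepos : (0:ℝ) < e := by positivity
  set S : ℝ := Real.sqrt e with hS
  have hSpos : 0 < S := Real.sqrt_pos.mpr hepos
  have hS2 : S^2 = e := Real.sq_sqrt hepos.le
  set z : Fin n → ℝ := fun i => c i + u i * t with hz
  set x : Fin n → ℝ := fun i => S⁻¹ * z i with hx
  have hz2 : ∑ i, z i ^ 2 = e := by
    have expand : ∀ i, z i ^ 2 = c i ^2 + (u i * c i) * (2*t) + (u i ^2) * t^2 := by
      intro i; rw [hz]; ring
    rw [Finset.sum_congr rfl fun i _ => expand i, Finset.sum_add_distrib,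
      Finset.sum_add_distrib, ← Finset.sum_mul, ← Finset.sum_mul, hc, huc, hu2, he]
    ring
  have hx1 : ∑ i, x i ^ 2 = 1 := by
    have expand : ∀ i, x i ^2 = S⁻¹^2 * z i ^2 := by intro i; rw [hx]; ring
    rw [Finset.sum_congr rfl fun i _ => expand i, ← Finset.mul_sum, hz2, inv_pow, hS2,
      inv_mul_cancel₀ (ne_of_gt hepos)]
  have hmast := master (n := n) hd0 P hP x hx1
  -- scaling
  have hevalxP : eval x P = S⁻¹^d * (p.eval t) := by
    rw [hx]
    rw [eval_smul_homog hP S⁻¹ z, hp, lineP_eval]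
  have hevalxD : ∀ i, eval x (pderiv i P) = S⁻¹^(d-1) * ((q i).eval t) := by
    intro i
    rw [hx, eval_smul_homog (pderiv_isHomogeneous hP i) S⁻¹ z, hq]
    simp only []
    rw [lineP_eval]
  have hseval : s.eval t = e := by rw [hs]; simp [he]
  have hyeval : ∀ i, (yy i).eval t = z i := by
    intro i; rw [hyy, hz]; simp
  have hreval : ∀ i, (rr i).eval t = e * ((q i).eval t) - d * (p.eval t) * z i := by
    intro i
    rw [hrr]
    simp only [Polynomial.eval_sub, Polynomial.eval_mul, Polynomial.eval_C, hseval, hyeval i]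
  have hGeval : G.eval t = d * e^2 * (p.eval t)^2 + e * (∑ i, ((rr i).eval t)^2)
      - (d * a^2) * e^(d+2) := by
    rw [hG]
    simp only [Polynomial.eval_sub, Polynomial.eval_add, Polynomial.eval_mul,
      Polynomial.eval_pow, Polynomial.eval_C, hseval, Polynomial.eval_finset_sum]
  have hSd1 : S⁻¹^(d-1) = S⁻¹^(d+1) * e := by
    have h1 : S⁻¹^(d+1) = S⁻¹^(d-1) * S⁻¹^2 := by
      rw [← pow_add]; congr 1; omega
    rw [h1, inv_pow S 2, hS2, mul_assoc, inv_mul_cancel₀ (ne_of_gt hepos), mul_one]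
  have hw : ∀ i, eval x (pderiv i P) - d * eval x P * x i = S⁻¹^(d+1) * ((rr i).eval t) := by
    intro i
    rw [hevalxD i, hevalxP, hreval i, hSd1, hx]
    have : S⁻¹^d * S⁻¹ = S⁻¹^(d+1) := by rw [← pow_succ]
    rw [← this]
    ring
  have hpow2 : (S⁻¹^(d+1))^2 = (e^(d+1))⁻¹ := by
    rw [← pow_mul, mul_comm (d+1) 2, pow_mul, inv_pow S 2, hS2, inv_pow]
  have hpowd : (S⁻¹^d)^2 = (e^d)⁻¹ := by
    rw [← pow_mul, mul_comm d 2, pow_mul, inv_pow S 2, hS2, inv_pow]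
  have hAform : (eval x P)^2 + (∑ i, (eval x (pderiv i P) - d * eval x P * x i)^2) / d
      = a^2 + G.eval t / (d * e^(d+2)) := by
    rw [hevalxP]
    have hterm : ∀ i : Fin n, (eval x (pderiv i P) - ↑d * (S⁻¹^d * (p.eval t)) * x i)^2
        = (S⁻¹^(d+1))^2 * ((rr i).eval t)^2 := by
      intro i
      rw [← hevalxP, hw i]
      ring
    rw [Finset.sum_congr rfl fun i _ => hterm i, ← Finset.mul_sum, hpow2]
    have h1 : (S⁻¹^d * p.eval t)^2 = (e^d)⁻¹ * (p.eval t)^2 := by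
      rw [mul_pow, hpowd]
    rw [h1, hGeval]
    have hed : e^d ≠ 0 := by positivity
    have hed1 : e^(d+1) ≠ 0 := by positivity
    have hed2 : e^(d+2) ≠ 0 := by positivity
    have hdne : (d:ℝ) ≠ 0 := ne_of_gt hdR
    field_simp
    ring
  have hAneg : (eval x P)^2 + (∑ i, (eval x (pderiv i P) - d * eval x P * x i)^2) / d < a^2 := by
    rw [hAform]
    have : G.eval t / (d * e^(d+2)) < 0 :=
      div_neg_of_neg_of_pos hGt (by positivity)
    linarith
  have hAnn : 0 ≤ (eval x P)^2 + (∑ i, (eval x (pderiv i P) - d * eval x P * x i)^2) / d := by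
    have h1 : 0 ≤ (∑ i, (eval x (pderiv i P) - d * eval x P * x i)^2) :=
      Finset.sum_nonneg fun i _ => sq_nonneg _
    have := sq_nonneg (eval x P)
    positivity
  have hfinal : Real.sqrt ((eval x P)^2 + (∑ i, (eval x (pderiv i P) - d * eval x P * x i)^2) / d)
      < distDisc n d P := by
    rw [← hval]
    calc Real.sqrt _ < Real.sqrt (a^2) := Real.sqrt_lt_sqrt hAnn hAneg
      _ = |a| := Real.sqrt_sq_eq_abs a
  exact absurd (lt_of_le_of_lt hmast hfinal) (lt_irrefl _)
end
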